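/- arXiv:1206.7073 — 7 statements merged into one kernel-verified Lean document; each statement's English description precedes it below -/
import Mathlib

section
/- Fix integers m ≥ 1 and n with 2m ≤ n. Let ℰ be a family of subsets of {0, …, n}, each of cardinality 2m+1, and let E ⊆ ℝⁿ be a linear subspace of dimension 2m such that: (a) the quotient map π : ℝⁿ → ℝⁿ/E is injective on ⋃_{P∈ℰ} σ_P, and (b) ⋃_{P∈ℰ} π(σ_P) = ℝⁿ/E. Let A = (a_{i,j}) be an n×(2m) real matrix whose columns form a basis of E; define ℓ_0 := 0 ∈ (ℂ^m)* and, for i = 1, …, n, let ℓ_i be the linear form on ℂ^m with coordinates ℓ_{i,k} := a_{i,k} + √−1·a_{i,m+k} for k = 1, …, m. Then the pair (ℒ, ℰ) with ℒ = (ℓ_0, …, ℓ_n) satisfies Bosio's two conditions: (SEP) for every P ∈ ℰ and every i ∈ {0, …, n} there exists j ∈ P with (P ∖ {j}) ∪ {i} ∈ ℰ; and (imbrication) for all P, Q ∈ ℰ the interiors of the convex hulls conv{ℓ_k : k ∈ P} and conv{ℓ_k : k ∈ Q} in (ℂ^m)* have nonempty intersection. -/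
/-- The `n+1` distinguished vectors of `ℝⁿ` generating the rays of the fan of `ℙⁿ(ℂ)`:
`e 0 = −(e 1 + ⋯ + e n)` and `e 1, …, e n` the canonical basis. -/
def stdVec (n : ℕ) (i : Fin (n + 1)) : Fin n → ℝ :=
  Fin.cases (fun _ => (-1 : ℝ)) (fun j => Pi.single j 1) i

/-- The cone `τ_S` of all nonnegative linear combinations of `{e i : i ∈ S}`. -/
def coneOf {n : ℕ} (S : Set (Fin (n + 1))) : Set (Fin n → ℝ) :=
  {x | ∃ c : Fin (n + 1) → ℝ, (∀ i, 0 ≤ c i) ∧ (∀ i, i ∉ S → c i = 0) ∧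
    x = ∑ i, c i • stdVec n i}

/-- The cone `σ_P := τ_{{0,…,n}∖P}`. -/
def sigmaCone {n : ℕ} (P : Finset (Fin (n + 1))) : Set (Fin n → ℝ) :=
  coneOf {i | i ∉ P}

/-- The linear forms `ℓ_0 := 0` and `ℓ_i`, `i = 1, …, n`, with coordinates
`ℓ_{i,k} := a_{i,k} + √−1 · a_{i,m+k}`, built from an `n × 2m` matrix `A`. -/
def formsOf (m n : ℕ) (A : Fin n → Fin (2 * m) → ℝ) : Fin (n + 1) → (Fin m → ℂ) :=
  fun i => Fin.cases (fun _ => (0 : ℂ))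
    (fun i' k => Complex.mk (A i' ⟨k.1, by omega⟩) (A i' ⟨m + k.1, by omega⟩)) i

open Pointwise

lemma stdVec_zero (n : ℕ) : stdVec n 0 = fun _ => (-1 : ℝ) := rfl

lemma stdVec_succ (n : ℕ) (i : Fin n) : stdVec n i.succ = Pi.single i 1 := by
  simp [stdVec]

lemma sum_stdVec (n : ℕ) : ∑ k : Fin (n+1), stdVec n k = 0 := by
  rw [Fin.sum_univ_succ]
  simp only [stdVec_zero, stdVec_succ]
  rw [Finset.univ_sum_single]
  funext j
  simp

lemma sum_smul_stdVec_apply {n : ℕ} (c : Fin (n+1) → ℝ) (j : Fin n) :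
    (∑ k : Fin (n+1), c k • stdVec n k) j = c j.succ - c 0 := by
  rw [Fin.sum_univ_succ]
  simp only [stdVec_zero, stdVec_succ, Finset.sum_apply, Pi.add_apply, Pi.smul_apply,
    Pi.single_apply, smul_eq_mul, mul_ite, mul_one, mul_zero]
  rw [Finset.sum_ite_eq Finset.univ j (fun i => c i.succ)]
  simp [sub_eq_neg_add]

lemma stdVec_rel {n : ℕ} {c c' : Fin (n+1) → ℝ}
    (h : ∑ k : Fin (n+1), c k • stdVec n k = ∑ k : Fin (n+1), c' k • stdVec n k) (k : Fin (n+1)) :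
    c k - c' k = c 0 - c' 0 := by
  induction k using Fin.cases with
  | zero => rfl
  | succ j =>
    have := congrFun h j
    rw [sum_smul_stdVec_apply, sum_smul_stdVec_apply] at this
    linarith

lemma coeff_eq {n : ℕ} {P Q : Finset (Fin (n+1))} (hPne : P.Nonempty) (hQne : Q.Nonempty)
    {c c' : Fin (n+1) → ℝ} (hc : ∀ k, 0 ≤ c k) (hc' : ∀ k, 0 ≤ c' k)
    (hcP : ∀ k ∈ P, c k = 0) (hc'Q : ∀ k ∈ Q, c' k = 0)
    (h : ∑ k : Fin (n+1), c k • stdVec n k = ∑ k : Fin (n+1), c' k • stdVec n k) : c = c' := by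
  obtain ⟨p, hp⟩ := hPne
  obtain ⟨q, hq⟩ := hQne
  have key := stdVec_rel h
  have h1 : c 0 - c' 0 ≤ 0 := by
    have hk := key p; rw [hcP p hp] at hk; have := hc' p; linarith
  have h2 : 0 ≤ c 0 - c' 0 := by
    have hk := key q; rw [hc'Q q hq] at hk; have := hc q; linarith
  funext k
  have hk := key k
  have : c k - c' k = 0 := by linarith
  linarith

lemma sigmaCone_mem {n : ℕ} {P : Finset (Fin (n+1))} {c : Fin (n+1) → ℝ}
    (hc0 : ∀ k, 0 ≤ c k) (hcP : ∀ k ∈ P, c k = 0) :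
    (∑ k : Fin (n+1), c k • stdVec n k) ∈ sigmaCone P := by
  exact ⟨c, hc0, fun i hi => hcP i (by simpa using hi), rfl⟩

lemma sigmaCone_elim {n : ℕ} {P : Finset (Fin (n+1))} {x : Fin n → ℝ}
    (hx : x ∈ sigmaCone P) :
    ∃ c : Fin (n+1) → ℝ, (∀ k, 0 ≤ c k) ∧ (∀ k ∈ P, c k = 0) ∧
      x = ∑ k : Fin (n+1), c k • stdVec n k := by
  obtain ⟨c, h0, h1, h2⟩ := hx
  exact ⟨c, h0, fun k hk => h1 k (by simpa using hk), h2⟩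

lemma quot_indep {n : ℕ} {ℰ : Set (Finset (Fin (n+1)))} {E : Submodule ℝ (Fin n → ℝ)}
    (hinj : Set.InjOn E.mkQ (⋃ P ∈ ℰ, sigmaCone P)) {P : Finset (Fin (n+1))} (hP : P ∈ ℰ)
    (hPne : P.Nonempty) (t : Fin (n+1) → ℝ) (htP : ∀ k ∈ P, t k = 0)
    (h : ∑ k : Fin (n+1), t k • E.mkQ (stdVec n k) = 0) : ∀ k, t k = 0 := by
  set c : Fin (n+1) → ℝ := fun k => max (t k) 0 with hc
  set c' : Fin (n+1) → ℝ := fun k => max (-t k) 0 with hc'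
  have hcc' : ∀ k, c k - c' k = t k := fun k => max_zero_sub_max_neg_zero_eq_self (t k)
  have hc0 : ∀ k, 0 ≤ c k := fun k => le_max_right _ _
  have hc'0 : ∀ k, 0 ≤ c' k := fun k => le_max_right _ _
  have hcP : ∀ k ∈ P, c k = 0 := fun k hk => by simp [hc, htP k hk]
  have hc'P : ∀ k ∈ P, c' k = 0 := fun k hk => by simp [hc', htP k hk]
  have hx : (∑ k : Fin (n+1), c k • stdVec n k) ∈ sigmaCone P := sigmaCone_mem hc0 hcP
  have hy : (∑ k : Fin (n+1), c' k • stdVec n k) ∈ sigmaCone P := sigmaCone_mem hc'0 hc'P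
  have hmem : ∀ {z : Fin n → ℝ}, z ∈ sigmaCone P → z ∈ ⋃ P ∈ ℰ, sigmaCone P := by
    intro z hz
    exact Set.mem_biUnion hP hz
  have hpi : E.mkQ (∑ k : Fin (n+1), c k • stdVec n k)
      = E.mkQ (∑ k : Fin (n+1), c' k • stdVec n k) := by
    rw [map_sum, map_sum]
    simp only [map_smul]
    have : ∑ k : Fin (n+1), c k • E.mkQ (stdVec n k)
        - ∑ k : Fin (n+1), c' k • E.mkQ (stdVec n k)
        = ∑ k : Fin (n+1), t k • E.mkQ (stdVec n k) := by
      rw [← Finset.sum_sub_distrib]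
      congr 1; funext k
      rw [← sub_smul, hcc']
    rw [← sub_eq_zero]
    rw [this, h]
  have := hinj (hmem hx) (hmem hy) hpi
  have hcceq : c = c' := coeff_eq hPne hPne hc0 hc'0 hcP hc'P this
  intro k
  rw [← hcc' k, hcceq, sub_self]

lemma exists_quot_basis {m n : ℕ} (hmn : 2*m ≤ n) {ℰ : Set (Finset (Fin (n+1)))}
    {E : Submodule ℝ (Fin n → ℝ)} (hdim : Module.finrank ℝ E = 2*m)
    (hinj : Set.InjOn E.mkQ (⋃ P ∈ ℰ, sigmaCone P)) {P : Finset (Fin (n+1))} (hP : P ∈ ℰ)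
    (hcard : P.card = 2*m+1) :
    ∃ B : Module.Basis {k : Fin (n+1) // k ∉ P} ℝ ((Fin n → ℝ) ⧸ E),
      ∀ k, B k = E.mkQ (stdVec n k.val) := by
  classical
  have hPne : P.Nonempty := Finset.card_pos.mp (by omega)
  set f : {k : Fin (n+1) // k ∉ P} → ((Fin n → ℝ) ⧸ E) :=
    fun k => E.mkQ (stdVec n k.val) with hf
  have conv : ∀ t : Fin (n+1) → ℝ, (∀ k ∈ P, t k = 0) →
      ∑ j : Fin (n+1), t j • E.mkQ (stdVec n j)
        = ∑ j : {k : Fin (n+1) // k ∉ P}, t j.val • f j := by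
    intro t htP
    rw [← Finset.sum_subtype Pᶜ (fun x => Finset.mem_compl)
      (fun j => t j • E.mkQ (stdVec n j))]
    exact (Finset.sum_subset (Finset.subset_univ Pᶜ) (fun x _ hx => by
      rw [htP x (by simpa using hx), zero_smul])).symm
  have li : LinearIndependent ℝ f := by
    rw [Fintype.linearIndependent_iff]
    intro g hg k
    set t : Fin (n+1) → ℝ := fun k => if h : k ∈ P then 0 else g ⟨k, h⟩ with ht
    have htP : ∀ k ∈ P, t k = 0 := fun k hk => by simp [ht, hk]
    have hsum : ∑ j : Fin (n+1), t j • E.mkQ (stdVec n j) = 0 := by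
      rw [conv t htP]
      rw [← hg]
      exact Finset.sum_congr rfl (fun j _ => by simp [ht, j.prop])
    have := quot_indep hinj hP hPne t htP hsum k.val
    simpa [ht, k.prop] using this
  have hWfr : Module.finrank ℝ ((Fin n → ℝ) ⧸ E) = n - 2*m := by
    have h1 := Submodule.finrank_quotient_add_finrank E
    have h2 : Module.finrank ℝ (Fin n → ℝ) = n := by simp
    omega
  have hcardsub : Fintype.card {k : Fin (n+1) // k ∉ P} = n - 2*m := by
    have h1 : Fintype.card {k : Fin (n+1) // k ∈ P} = P.card := Fintype.card_coe P
    have := Fintype.card_subtype_compl (fun k : Fin (n+1) => k ∈ P)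
    rw [this, h1, Fintype.card_fin, hcard]
    omega
  have hspan : Submodule.span ℝ (Set.range f) = ⊤ := by
    apply Submodule.eq_top_of_finrank_eq
    rw [finrank_span_eq_card li, hcardsub, hWfr]
  exact ⟨Module.Basis.mk li (by rw [hspan]), fun k => Module.Basis.mk_apply li _ k⟩

lemma sum_restrict {M : Type*} [AddCommMonoid M] [Module ℝ M] {n : ℕ}
    {P : Finset (Fin (n+1))} (t : Fin (n+1) → ℝ) (htP : ∀ k ∈ P, t k = 0)
    (v : Fin (n+1) → M) :
    ∑ j : Fin (n+1), t j • v j = ∑ j : {k : Fin (n+1) // k ∉ P}, t j.val • v j.val := by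
  classical
  rw [← Finset.sum_subtype Pᶜ (fun x => Finset.mem_compl) (fun j => t j • v j)]
  exact (Finset.sum_subset (Finset.subset_univ Pᶜ) (fun x _ hx => by
    rw [htP x (by simpa using hx), zero_smul])).symm

lemma mem_image_iff_repr {n : ℕ} {E : Submodule ℝ (Fin n → ℝ)} {P : Finset (Fin (n+1))}
    (B : Module.Basis {k : Fin (n+1) // k ∉ P} ℝ ((Fin n → ℝ) ⧸ E))
    (hB : ∀ k, B k = E.mkQ (stdVec n k.val)) (z : (Fin n → ℝ) ⧸ E) :
    z ∈ E.mkQ '' sigmaCone P ↔ ∀ k, 0 ≤ B.repr z k := by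
  classical
  constructor
  · rintro ⟨x, hx, rfl⟩
    obtain ⟨c, hc0, hcP, rfl⟩ := sigmaCone_elim hx
    have : E.mkQ (∑ k : Fin (n+1), c k • stdVec n k)
        = ∑ j : {k : Fin (n+1) // k ∉ P}, c j.val • B j := by
      rw [map_sum]
      simp only [map_smul]
      rw [sum_restrict c hcP]
      exact Finset.sum_congr rfl (fun j _ => by rw [hB])
    rw [this, Module.Basis.repr_sum_self]
    intro k; exact hc0 k.val
  · intro hrepr
    set g := B.repr z with hg
    set c : Fin (n+1) → ℝ := fun k => if h : k ∈ P then 0 else g ⟨k, h⟩ with hc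
    have hcP : ∀ k ∈ P, c k = 0 := fun k hk => by simp [hc, hk]
    have hc0 : ∀ k, 0 ≤ c k := by
      intro k
      by_cases hk : k ∈ P
      · simp [hc, hk]
      · simpa [hc, hk] using hrepr ⟨k, hk⟩
    refine ⟨∑ k : Fin (n+1), c k • stdVec n k, sigmaCone_mem hc0 hcP, ?_⟩
    rw [map_sum]
    simp only [map_smul]
    rw [sum_restrict c hcP]
    have : ∀ j : {k : Fin (n+1) // k ∉ P}, c j.val • E.mkQ (stdVec n j.val) = g j • B j := by
      intro j; rw [hB]; congr 1; simp [hc, j.prop]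
    rw [Finset.sum_congr rfl (fun j _ => this j)]
    exact Module.Basis.sum_repr B z

lemma arith_aux {a b : ℝ} (ha : a < 0)
    (H : ∀ N : ℕ, ∃ j : ℕ, N < j ∧ 0 ≤ a - (1/((j:ℝ)+1)) * b) : False := by
  obtain ⟨j, hjgt, h1⟩ := H (Nat.ceil (b/a))
  have hba : b/a ≤ (j:ℝ) := le_trans (Nat.le_ceil _) (by exact_mod_cast hjgt.le)
  have h2 : a * (j:ℝ) ≤ b := by
    have h3 := mul_le_mul_of_nonpos_left hba ha.le
    rwa [mul_comm a (b/a), div_mul_cancel₀ b (ne_of_lt ha)] at h3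
  have hj1 : (0:ℝ) < (j:ℝ)+1 := by positivity
  have hjne : ((j:ℝ)+1) ≠ 0 := by positivity
  have hexp : ((j:ℝ)+1) * (a - 1/((j:ℝ)+1)*b) = ((j:ℝ)+1)*a - b := by
    field_simp
  have h6 : 0 ≤ ((j:ℝ)+1)*a - b := by
    rw [← hexp]; exact mul_nonneg hj1.le h1
  nlinarith

lemma sep_lemma {m n : ℕ} (hmn : 2*m ≤ n) {ℰ : Set (Finset (Fin (n+1)))}
    (hcard : ∀ P ∈ ℰ, P.card = 2*m+1) {E : Submodule ℝ (Fin n → ℝ)}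
    (hdim : Module.finrank ℝ E = 2*m)
    (hinj : Set.InjOn E.mkQ (⋃ P ∈ ℰ, sigmaCone P))
    (hcompl : (⋃ P ∈ ℰ, E.mkQ '' sigmaCone P) = Set.univ) :
    ∀ P ∈ ℰ, ∀ i : Fin (n+1), ∃ j ∈ P, insert i (P.erase j) ∈ ℰ := by
  classical
  intro P hP i
  by_cases hiP : i ∈ P
  · exact ⟨i, hiP, by rw [Finset.insert_erase hiP]; exact hP⟩
  obtain ⟨B, hB⟩ := exists_quot_basis hmn hdim hinj hP (hcard P hP)
  have hPne : P.Nonempty := Finset.card_pos.mp (by rw [hcard P hP]; omega)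
  have hxcP : ∀ k ∈ P, (if k ∈ P then (0:ℝ) else if k = i then 0 else 1) = 0 :=
    fun k hk => by simp [hk]
  have hxc0 : ∀ k : Fin (n+1), 0 ≤ (if k ∈ P then (0:ℝ) else if k = i then 0 else 1) := by
    intro k; by_cases h1 : k ∈ P <;> by_cases h2 : k = i <;> simp [h1, h2]
  set xc : Fin (n+1) → ℝ := fun k => if k ∈ P then (0:ℝ) else if k = i then 0 else 1 with hxc
  set x : (Fin n → ℝ) ⧸ E := ∑ k : Fin (n+1), xc k • E.mkQ (stdVec n k) with hxdef
  set u : (Fin n → ℝ) ⧸ E := E.mkQ (stdVec n i) with hu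
  have hcov : ∀ j : ℕ, ∃ Q, Q ∈ ℰ ∧
      (x - (1/((j:ℝ)+1)) • u) ∈ E.mkQ '' sigmaCone Q := by
    intro j
    have hz : (x - (1/((j:ℝ)+1)) • u) ∈ ⋃ P ∈ ℰ, E.mkQ '' sigmaCone P := by
      rw [hcompl]; trivial
    obtain ⟨Q, hQ, hzz⟩ := Set.mem_iUnion₂.mp hz
    exact ⟨Q, hQ, hzz⟩
  choose Qf hQf1 hQf2 using hcov
  obtain ⟨Q, hQinf⟩ := Finite.exists_infinite_fiber Qf
  have hJinf : (Qf ⁻¹' {Q}).Infinite := Set.infinite_coe_iff.mp hQinf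
  obtain ⟨j0, hj0⟩ := hJinf.nonempty
  have hj0Q : Qf j0 = Q := hj0
  have hQℰ : Q ∈ ℰ := hj0Q ▸ hQf1 j0
  obtain ⟨BQ, hBQ⟩ := exists_quot_basis hmn hdim hinj hQℰ (hcard Q hQℰ)
  have hQne : Q.Nonempty := Finset.card_pos.mp (by rw [hcard Q hQℰ]; omega)
  have hmemQ : ∀ j : ℕ, Qf j = Q →
      (x - (1/((j:ℝ)+1)) • u) ∈ E.mkQ '' sigmaCone Q := by
    intro j hj; rw [← hj]; exact hQf2 j
  have hrep : ∀ j : ℕ, Qf j = Q → ∀ k,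
      0 ≤ BQ.repr x k - (1/((j:ℝ)+1)) * BQ.repr u k := by
    intro j hj k
    have h0 := (mem_image_iff_repr BQ hBQ _).mp (hmemQ j hj) k
    have heq : (BQ.repr (x - (1/((j:ℝ)+1)) • u)) k
        = BQ.repr x k - (1/((j:ℝ)+1)) * BQ.repr u k := by
      rw [map_sub, map_smul]; simp
    rwa [heq] at h0
  have hxQ : x ∈ E.mkQ '' sigmaCone Q := by
    rw [mem_image_iff_repr BQ hBQ]
    intro k
    by_contra hcon
    push_neg at hcon
    refine arith_aux (b := BQ.repr u k) hcon (fun N => ?_)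
    obtain ⟨j, hjJ, hjgt⟩ := hJinf.exists_gt N
    exact ⟨j, hjgt, hrep j hjJ k⟩
  -- identify representations
  obtain ⟨x2, hx2Q, hx2⟩ := hxQ
  obtain ⟨c2, hc20, hc2Q, hc2rep⟩ := sigmaCone_elim hx2Q
  have hx1mem : (∑ k : Fin (n+1), xc k • stdVec n k) ∈ sigmaCone P := sigmaCone_mem hxc0 hxcP
  have hx1pi : E.mkQ (∑ k : Fin (n+1), xc k • stdVec n k) = x := by
    rw [map_sum]; simp only [map_smul]; rfl
  have hx12 : (∑ k : Fin (n+1), xc k • stdVec n k) = x2 := by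
    apply hinj (Set.mem_biUnion hP hx1mem) (Set.mem_biUnion hQℰ hx2Q)
    rw [hx1pi, hx2]
  have hxceq : xc = c2 := by
    apply coeff_eq hPne hQne hxc0 hc20 hxcP hc2Q
    rw [← hc2rep, hx12]
  -- Q ≠ P
  have hxrep : ⇑(B.repr x) = fun j : {k : Fin (n+1) // k ∉ P} => xc j.val := by
    have hxsub : x = ∑ j : {k : Fin (n+1) // k ∉ P}, xc j.val • B j := by
      rw [hxdef, sum_restrict xc hxcP]
      exact Finset.sum_congr rfl (fun j _ => by rw [hB])
    rw [hxsub, Module.Basis.repr_sum_self]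
  have hQneP : Q ≠ P := by
    intro hQP
    have hmem0 := hmemQ j0 hj0Q
    rw [hQP] at hmem0
    have hco := (mem_image_iff_repr B hB _).mp hmem0 ⟨i, hiP⟩
    have heq : (B.repr (x - (1/((j0:ℝ)+1)) • u)) ⟨i, hiP⟩
        = B.repr x ⟨i, hiP⟩ - (1/((j0:ℝ)+1)) * B.repr u ⟨i, hiP⟩ := by
      rw [map_sub, map_smul]; simp
    rw [heq] at hco
    have h1 : B.repr x ⟨i, hiP⟩ = 0 := by
      rw [hxrep]; simp [hxc, hiP]
    have h2 : B.repr u ⟨i, hiP⟩ = 1 := by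
      rw [hu, ← hB ⟨i, hiP⟩, Module.Basis.repr_self_apply]
      simp
    rw [h1, h2] at hco
    have : (0:ℝ) < 1/((j0:ℝ)+1) := by positivity
    linarith
  have hQsubPi : ∀ k ∈ Q, k ∈ P ∨ k = i := by
    intro k hk
    by_contra hcon
    push_neg at hcon
    have h1 : xc k = 1 := by simp [hxc, hcon.1, hcon.2]
    have h2 : c2 k = 0 := hc2Q k hk
    rw [hxceq] at h1
    rw [h2] at h1
    exact zero_ne_one h1
  obtain ⟨j', hj'P, hj'Q⟩ : ∃ j', j' ∈ P ∧ j' ∉ Q := by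
    by_contra hcon
    push_neg at hcon
    exact hQneP.symm (Finset.eq_of_subset_of_card_le hcon
      (by rw [hcard P hP, hcard Q hQℰ]))
  refine ⟨j', hj'P, ?_⟩
  have hfin : Q = insert i (P.erase j') := by
    apply Finset.eq_of_subset_of_card_le
    · intro k hk
      rcases hQsubPi k hk with h | h
      · exact Finset.mem_insert_of_mem (Finset.mem_erase.mpr
          ⟨fun he => hj'Q (he ▸ hk), h⟩)
      · rw [h]; exact Finset.mem_insert_self _ _
    · rw [Finset.card_insert_of_notMem (fun hmem => hiP (Finset.mem_of_mem_erase hmem)),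
        Finset.card_erase_of_mem hj'P, hcard P hP, hcard Q hQℰ]
      omega
  rw [← hfin]; exact hQℰ


lemma formsOf_zero (m n : ℕ) (A : Fin n → Fin (2 * m) → ℝ) : formsOf m n A 0 = fun _ => 0 := rfl

lemma formsOf_succ (m n : ℕ) (A : Fin n → Fin (2 * m) → ℝ) (i : Fin n) (k : Fin m)
    (h1 : (k:ℕ) < 2*m) (h2 : m + (k:ℕ) < 2*m) :
    formsOf m n A i.succ k = Complex.mk (A i ⟨k.1, h1⟩) (A i ⟨m + k.1, h2⟩) := by
  simp [formsOf]

lemma forms_sum_apply {m n : ℕ} (A : Fin n → Fin (2 * m) → ℝ) (β : Fin (n+1) → ℝ)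
    (k : Fin m) (h1 : (k:ℕ) < 2*m) (h2 : m + (k:ℕ) < 2*m) :
    (∑ j : Fin (n+1), β j • formsOf m n A j) k
      = Complex.mk (∑ i : Fin n, β i.succ * A i ⟨k.1, h1⟩)
          (∑ i : Fin n, β i.succ * A i ⟨m + k.1, h2⟩) := by
  rw [Finset.sum_apply, Fin.sum_univ_succ]
  apply Complex.ext
  · simp [formsOf_zero, formsOf_succ m n A _ k h1 h2, Complex.real_smul]
  · simp [formsOf_zero, formsOf_succ m n A _ k h1 h2, Complex.real_smul]

lemma forms_sum_zero_of {m n : ℕ} (A : Fin n → Fin (2 * m) → ℝ) (β : Fin (n+1) → ℝ)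
    (h : ∀ j : Fin (2*m), ∑ i : Fin n, β i.succ * A i j = 0) :
    ∑ j : Fin (n+1), β j • formsOf m n A j = 0 := by
  funext k
  have h1 : (k:ℕ) < 2*m := by omega
  have h2 : m + (k:ℕ) < 2*m := by have := k.2; omega
  rw [Pi.zero_apply, forms_sum_apply A β k h1 h2, h _, h _]
  simp [Complex.ext_iff]

lemma forms_sum_zero_to {m n : ℕ} (A : Fin n → Fin (2 * m) → ℝ) (β : Fin (n+1) → ℝ)
    (h : ∑ j : Fin (n+1), β j • formsOf m n A j = 0) :
    ∀ j : Fin (2*m), ∑ i : Fin n, β i.succ * A i j = 0 := by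
  intro j
  by_cases hj : (j:ℕ) < m
  · have hc := congrFun h (⟨j.1, hj⟩ : Fin m)
    rw [forms_sum_apply A β ⟨j.1, hj⟩ (by omega) (by have := j.2; omega)] at hc
    have := congrArg Complex.re hc
    simpa using this
  · have hjm : (j:ℕ) - m < m := by have := j.2; omega
    have hc := congrFun h (⟨j.1 - m, hjm⟩ : Fin m)
    rw [forms_sum_apply A β ⟨j.1 - m, hjm⟩ (by have := j.2; omega) (by have := j.2; omega)] at hc
    have him := congrArg Complex.im hc
    have hval : (⟨m + ((j:ℕ) - m), by have := j.2; omega⟩ : Fin (2*m)) = j := by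
      apply Fin.ext; simp; omega
    rw [hval] at him
    simpa using him

lemma sum_extend {M : Type*} [AddCommMonoid M] [Module ℝ M] {n : ℕ}
    {P : Finset (Fin (n+1))} (g : {k : Fin (n+1) // k ∈ P} → ℝ) (v : Fin (n+1) → M) :
    ∑ k : Fin (n+1), (if h : k ∈ P then g ⟨k, h⟩ else 0) • v k
      = ∑ e : {k : Fin (n+1) // k ∈ P}, g e • v e.val := by
  classical
  rw [← Finset.sum_subset (Finset.subset_univ P)
    (fun x _ hx => by simp [hx] : ∀ x ∈ Finset.univ, x ∉ P →
      (if h : x ∈ P then g ⟨x, h⟩ else 0) • v x = 0)]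
  rw [← Finset.sum_attach P (fun k => (if h : k ∈ P then g ⟨k, h⟩ else 0) • v k)]
  exact Finset.sum_congr rfl (fun e _ => by simp [e.prop])

lemma lift_vanish {m n : ℕ} (hmn : 2*m ≤ n) {ℰ : Set (Finset (Fin (n+1)))}
    {E : Submodule ℝ (Fin n → ℝ)} (hdim : Module.finrank ℝ E = 2*m)
    (hinj : Set.InjOn E.mkQ (⋃ P ∈ ℰ, sigmaCone P)) {P : Finset (Fin (n+1))} (hP : P ∈ ℰ)
    (hcard : P.card = 2*m+1) {A : Fin n → Fin (2 * m) → ℝ}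
    (hAspan : Submodule.span ℝ (Set.range fun j : Fin (2 * m) => fun i : Fin n => A i j) = E)
    (β : Fin (n+1) → ℝ) (hβP : ∀ k, k ∉ P → β k = 0)
    (hβsum : ∑ k : Fin (n+1), β k = 0)
    (hβA : ∀ j : Fin (2*m), ∑ i : Fin n, β i.succ * A i j = 0) :
    β = 0 := by
  classical
  obtain ⟨B, hB⟩ := exists_quot_basis hmn hdim hinj hP hcard
  set Λ : (Fin n → ℝ) →ₗ[ℝ] ℝ := ∑ i : Fin n, β i.succ • LinearMap.proj i with hΛ
  have hΛapp : ∀ u : Fin n → ℝ, Λ u = ∑ i : Fin n, β i.succ * u i := by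
    intro u
    rw [hΛ, LinearMap.sum_apply]
    exact Finset.sum_congr rfl (fun i _ => by simp)
  have hEker : E ≤ LinearMap.ker Λ := by
    rw [← hAspan, Submodule.span_le]
    rintro _ ⟨j, rfl⟩
    simp only [SetLike.mem_coe, LinearMap.mem_ker]
    rw [hΛapp]
    exact hβA j
  set lam : ((Fin n → ℝ) ⧸ E) →ₗ[ℝ] ℝ := E.liftQ Λ hEker with hlam
  have hlamw : ∀ k : Fin (n+1), lam (E.mkQ (stdVec n k)) = β k := by
    intro k
    have hq : lam (E.mkQ (stdVec n k)) = Λ (stdVec n k) := rfl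
    rw [hq]
    induction k using Fin.cases with
    | zero =>
      rw [hΛapp, stdVec_zero]
      have : ∑ i : Fin n, β i.succ * (-1) = -∑ i : Fin n, β i.succ := by
        rw [← Finset.sum_neg_distrib]
        exact Finset.sum_congr rfl (fun i _ => by ring)
      rw [this]
      rw [Fin.sum_univ_succ] at hβsum
      linarith
    | succ i =>
      rw [hΛapp, stdVec_succ]
      simp only [Pi.single_apply, mul_ite, mul_one, mul_zero]
      rw [Finset.sum_ite_eq' Finset.univ i (fun j => β j.succ)]
      simp
  have hlam0 : lam = 0 := by
    apply B.ext
    intro k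
    rw [hB k, hlamw, LinearMap.zero_apply]
    exact hβP k.val k.prop
  funext k
  rw [← hlamw k, hlam0, LinearMap.zero_apply, Pi.zero_apply]

lemma forms_affine_indep {m n : ℕ} (hmn : 2*m ≤ n) {ℰ : Set (Finset (Fin (n+1)))}
    {E : Submodule ℝ (Fin n → ℝ)} (hdim : Module.finrank ℝ E = 2*m)
    (hinj : Set.InjOn E.mkQ (⋃ P ∈ ℰ, sigmaCone P)) {P : Finset (Fin (n+1))} (hP : P ∈ ℰ)
    (hcard : P.card = 2*m+1) {A : Fin n → Fin (2 * m) → ℝ}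
    (hAspan : Submodule.span ℝ (Set.range fun j : Fin (2 * m) => fun i : Fin n => A i j) = E) :
    AffineIndependent ℝ (fun k : {k : Fin (n+1) // k ∈ P} => formsOf m n A k.val) := by
  classical
  rw [affineIndependent_iff]
  intro s w hw0 hwsum
  set g : {k : Fin (n+1) // k ∈ P} → ℝ := fun e => if e ∈ s then w e else 0 with hg
  set β : Fin (n+1) → ℝ := fun k => if h : k ∈ P then g ⟨k, h⟩ else 0 with hβ
  have hβP : ∀ k, k ∉ P → β k = 0 := fun k hk => by simp [hβ, hk]
  have hgsum : ∀ (v : Fin (n+1) → (Fin m → ℂ)),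
      ∑ k : Fin (n+1), β k • v k = ∑ e ∈ s, w e • v e.val := by
    intro v
    rw [hβ]
    rw [sum_extend g v]
    rw [hg]
    simp only [ite_smul, zero_smul]
    rw [Finset.sum_ite_mem, Finset.univ_inter]
  have hβsum : ∑ k : Fin (n+1), β k = 0 := by
    have h1 : ∑ k : Fin (n+1), β k • (1:ℝ) = ∑ e ∈ s, w e • (1:ℝ) := by
      rw [hβ, sum_extend g (fun _ => (1:ℝ)), hg]
      simp only [ite_smul, zero_smul]
      rw [Finset.sum_ite_mem, Finset.univ_inter]
    simp only [smul_eq_mul, mul_one] at h1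
    rw [h1, hw0]
  have hβf : ∑ k : Fin (n+1), β k • formsOf m n A k = 0 := by
    rw [hgsum (formsOf m n A), hwsum]
  have hβ0 := lift_vanish hmn hdim hinj hP hcard hAspan β hβP hβsum
    (forms_sum_zero_to A β hβf)
  intro e he
  have h2 : β e.val = w e := by simp [hβ, hg, e.prop, he]
  rw [hβ0] at h2
  exact h2.symm

lemma exists_sep_t {m n : ℕ} (hmn : 2*m ≤ n) {ℰ : Set (Finset (Fin (n+1)))}
    (hcard : ∀ P ∈ ℰ, P.card = 2*m+1) {E : Submodule ℝ (Fin n → ℝ)}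
    (hdim : Module.finrank ℝ E = 2*m)
    (hinj : Set.InjOn E.mkQ (⋃ P ∈ ℰ, sigmaCone P))
    {A : Fin n → Fin (2 * m) → ℝ}
    (hAspan : Submodule.span ℝ (Set.range fun j : Fin (2 * m) => fun i : Fin n => A i j) = E)
    {P Q : Finset (Fin (n+1))} (hP : P ∈ ℰ) (hQ : Q ∈ ℰ) (hPQ : P ≠ Q) :
    ∃ t : Fin (n+1) → ℝ, (∀ k, k ∉ P ∪ Q → t k = 0) ∧ (∀ k ∈ P \ Q, 0 < t k) ∧
      (∀ k ∈ Q \ P, t k < 0) ∧ (∑ k : Fin (n+1), t k = 0) ∧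
      (∀ j : Fin (2*m), ∑ i : Fin n, t i.succ * A i j = 0) := by
  classical
  have hPne : P.Nonempty := Finset.card_pos.mp (by rw [hcard P hP]; omega)
  have hQne : Q.Nonempty := Finset.card_pos.mp (by rw [hcard Q hQ]; omega)
  have hQPne : (Q \ P).Nonempty := by
    rw [Finset.sdiff_nonempty]
    intro hsub
    exact hPQ (Finset.eq_of_subset_of_card_le hsub (by rw [hcard P hP, hcard Q hQ]) ).symm
  have hPQne : (P \ Q).Nonempty := by
    rw [Finset.sdiff_nonempty]
    intro hsub
    exact hPQ (Finset.eq_of_subset_of_card_le hsub (by rw [hcard P hP, hcard Q hQ]))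
  set ι := {k : Fin (n+1) // k ∈ Q \ P} ⊕ {k : Fin (n+1) // k ∈ P \ Q} with hι
  set ψ : ι → (Fin n → ℝ) :=
    Sum.elim (fun k => stdVec n k.val) (fun k => -stdVec n k.val) with hψ
  set g : (ι → ℝ) →ₗ[ℝ] (Fin n → ℝ) := Fintype.linearCombination ℝ ψ with hg
  set U : Submodule ℝ (Fin n → ℝ) :=
    Submodule.span ℝ (Set.range (fun k : {k : Fin (n+1) // k ∈ (P ∪ Q)ᶜ} => stdVec n k.val))
    with hU
  set T : Set (Fin n → ℝ) := (g '' stdSimplex ℝ ι) + (↑(U ⊔ E) : Set (Fin n → ℝ)) with hT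
  have hTconv : Convex ℝ T := Convex.add ((convex_stdSimplex ℝ ι).linear_image g)
    (U ⊔ E).convex
  have hTclosed : IsClosed T :=
    IsClosed.add_left_of_isCompact (U ⊔ E).closed_of_finiteDimensional
      ((isCompact_stdSimplex ℝ ι).image g.continuous_of_finiteDimensional)
  have h0T : (0 : Fin n → ℝ) ∉ T := by
    intro h0
    rw [hT, Set.mem_add] at h0
    obtain ⟨κ, hκ, z, hz, hsum0⟩ := h0
    obtain ⟨θ, hθ, rfl⟩ := hκ
    obtain ⟨zU, hzU, e, he, rfl⟩ := Submodule.mem_sup.mp hz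
    obtain ⟨gc, hgc⟩ := (Submodule.mem_span_range_iff_exists_fun ℝ).mp hzU
    set a : Fin (n+1) → ℝ := fun k => if h : k ∈ Q \ P then θ (Sum.inl ⟨k, h⟩) else 0 with ha
    set b : Fin (n+1) → ℝ := fun k => if h : k ∈ P \ Q then θ (Sum.inr ⟨k, h⟩) else 0 with hb
    set gg : Fin (n+1) → ℝ := fun k => if h : k ∈ (P ∪ Q)ᶜ then gc ⟨k, h⟩ else 0 with hgg
    have hκeq : g θ = ∑ k : Fin (n+1), a k • stdVec n k - ∑ k : Fin (n+1), b k • stdVec n k := by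
      rw [hg, Fintype.linearCombination_apply, Fintype.sum_sum_type]
      rw [ha, hb, sum_extend (fun k : {k : Fin (n+1) // k ∈ Q \ P} => θ (Sum.inl k))
        (fun k => stdVec n k),
        sum_extend (fun k : {k : Fin (n+1) // k ∈ P \ Q} => θ (Sum.inr k))
        (fun k => stdVec n k)]
      rw [sub_eq_add_neg, ← Finset.sum_neg_distrib]
      exact congrArg₂ (· + ·)
        (Finset.sum_congr rfl (fun k _ => by rw [hψ]; simp))
        (Finset.sum_congr rfl (fun k _ => by rw [hψ]; simp))
    have hzUeq : zU = ∑ k : Fin (n+1), gg k • stdVec n k := by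
      rw [hgg, sum_extend gc (fun k => stdVec n k), hgc]
    set c1 : Fin (n+1) → ℝ := fun k => a k + max (gg k) 0 with hc1
    set c2 : Fin (n+1) → ℝ := fun k => b k + max (-gg k) 0 with hc2
    have ha0 : ∀ k, 0 ≤ a k := by
      intro k; rw [ha]; dsimp only; split
      · exact hθ.1 _
      · exact le_rfl
    have hb0 : ∀ k, 0 ≤ b k := by
      intro k; rw [hb]; dsimp only; split
      · exact hθ.1 _
      · exact le_rfl
    have hc10 : ∀ k, 0 ≤ c1 k := fun k => add_nonneg (ha0 k) (le_max_right _ _)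
    have hc20 : ∀ k, 0 ≤ c2 k := fun k => add_nonneg (hb0 k) (le_max_right _ _)
    have hggP : ∀ k, k ∈ P ∪ Q → gg k = 0 := by
      intro k hk; rw [hgg]; dsimp only
      rw [dif_neg (by simp only [Finset.mem_compl, not_not]; exact hk)]
    have hc1P : ∀ k ∈ P, c1 k = 0 := by
      intro k hk
      have h1 : a k = 0 := by rw [ha]; dsimp only; rw [dif_neg (by simp [hk])]
      have h2 : gg k = 0 := hggP k (Finset.mem_union_left _ hk)
      rw [hc1]; dsimp only; rw [h1, h2]; simp
    have hc2Q : ∀ k ∈ Q, c2 k = 0 := by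
      intro k hk
      have h1 : b k = 0 := by rw [hb]; dsimp only; rw [dif_neg (by simp [hk])]
      have h2 : gg k = 0 := hggP k (Finset.mem_union_right _ hk)
      rw [hc2]; dsimp only; rw [h1, h2]; simp
    have hx1 : (∑ k : Fin (n+1), c1 k • stdVec n k) ∈ sigmaCone P := sigmaCone_mem hc10 hc1P
    have hx2 : (∑ k : Fin (n+1), c2 k • stdVec n k) ∈ sigmaCone Q := sigmaCone_mem hc20 hc2Q
    have hdiff : (∑ k : Fin (n+1), c1 k • stdVec n k) - (∑ k : Fin (n+1), c2 k • stdVec n k)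
        = -e := by
      rw [← Finset.sum_sub_distrib]
      have : ∀ k : Fin (n+1), c1 k • stdVec n k - c2 k • stdVec n k
          = (a k - b k + gg k) • stdVec n k := by
        intro k
        rw [← sub_smul]
        congr 1
        rw [hc1, hc2]; dsimp only
        have := max_zero_sub_max_neg_zero_eq_self (gg k)
        linarith [this]
      rw [Finset.sum_congr rfl (fun k _ => this k)]
      have hterm : ∀ k : Fin (n+1), (a k - b k + gg k) • stdVec n k
          = (a k • stdVec n k - b k • stdVec n k) + gg k • stdVec n k := by
        intro k; rw [add_smul, sub_smul]
      rw [Finset.sum_congr rfl (fun k _ => hterm k), Finset.sum_add_distrib,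
        Finset.sum_sub_distrib, ← hκeq, ← hzUeq, eq_neg_iff_add_eq_zero, add_assoc]
      exact hsum0
    have hpieq : E.mkQ (∑ k : Fin (n+1), c1 k • stdVec n k)
        = E.mkQ (∑ k : Fin (n+1), c2 k • stdVec n k) := by
      rw [Submodule.mkQ_apply, Submodule.mkQ_apply, Submodule.Quotient.eq]
      rw [hdiff]
      exact E.neg_mem he
    have heq12 := hinj (Set.mem_biUnion hP hx1) (Set.mem_biUnion hQ hx2) hpieq
    have hc12 : c1 = c2 := coeff_eq hPne hQne hc10 hc20 hc1P hc2Q heq12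
    -- conclude θ = 0, contradicting sum θ = 1
    have haz : ∀ k ∈ Q \ P, a k = 0 := by
      intro k hk
      have h2 : gg k = 0 := hggP k (Finset.mem_union_right _ (Finset.mem_sdiff.mp hk).1)
      have h3 : b k = 0 := by
        rw [hb]; dsimp only
        rw [dif_neg]
        intro hmem
        exact (Finset.mem_sdiff.mp hmem).2 (Finset.mem_sdiff.mp hk).1
      have := congrFun hc12 k
      rw [hc1, hc2] at this; dsimp only at this
      rw [h2, h3] at this
      simpa using this
    have hbz : ∀ k ∈ P \ Q, b k = 0 := by
      intro k hk
      have h2 : gg k = 0 := hggP k (Finset.mem_union_left _ (Finset.mem_sdiff.mp hk).1)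
      have h3 : a k = 0 := by
        rw [ha]; dsimp only
        rw [dif_neg]
        intro hmem
        exact (Finset.mem_sdiff.mp hmem).2 (Finset.mem_sdiff.mp hk).1
      have := congrFun hc12 k
      rw [hc1, hc2] at this; dsimp only at this
      rw [h2, h3] at this
      simpa using this.symm
    have hθ1 := hθ.2
    rw [Fintype.sum_sum_type] at hθ1
    have hleft : ∀ k : {k : Fin (n+1) // k ∈ Q \ P}, θ (Sum.inl k) = 0 := by
      intro k
      have := haz k.val k.prop
      rw [ha] at this; dsimp only at this
      rwa [dif_pos k.prop, Subtype.coe_eta] at this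
    have hright : ∀ k : {k : Fin (n+1) // k ∈ P \ Q}, θ (Sum.inr k) = 0 := by
      intro k
      have := hbz k.val k.prop
      rw [hb] at this; dsimp only at this
      rwa [dif_pos k.prop, Subtype.coe_eta] at this
    rw [Finset.sum_congr rfl (fun k _ => hleft k), Finset.sum_congr rfl (fun k _ => hright k)]
      at hθ1
    simp at hθ1
  -- separation
  obtain ⟨f, u0, hfT, hf0⟩ := geometric_hahn_banach_closed_point hTconv hTclosed h0T
  have hf00 : f 0 = 0 := map_zero f
  have hu0 : u0 < 0 := by rw [hf00] at hf0; exact hf0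
  -- f vanishes on the subspace
  obtain ⟨e0, he0⟩ := hQPne
  have hκ0 : g (fun i => if i = Sum.inl ⟨e0, he0⟩ then 1 else 0) ∈ g '' stdSimplex ℝ ι := by
    refine Set.mem_image_of_mem _ ⟨fun i => by dsimp only; split <;> norm_num, ?_⟩
    rw [Finset.sum_eq_single (Sum.inl ⟨e0, he0⟩)] <;> simp
  set κ0 : Fin n → ℝ := g (fun i => if i = Sum.inl ⟨e0, he0⟩ then 1 else 0) with hκ0def
  have hfsub : ∀ z ∈ (U ⊔ E : Submodule ℝ (Fin n → ℝ)), f z = 0 := by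
    intro z hz
    by_contra hfz
    have hmem : ∀ r : ℝ, κ0 + r • z ∈ T := by
      intro r
      rw [hT]
      exact Set.add_mem_add hκ0 ((U ⊔ E).smul_mem r hz)
    have hr := hfT _ (hmem ((u0 - f κ0)/(f z)))
    rw [map_add, map_smul] at hr
    rw [smul_eq_mul, div_mul_cancel₀ _ hfz] at hr
    linarith
  refine ⟨fun k => f (stdVec n k), ?_, ?_, ?_, ?_, ?_⟩
  · intro k hk
    apply hfsub
    apply Submodule.mem_sup_left
    rw [hU]
    exact Submodule.subset_span ⟨⟨k, by simpa using hk⟩, rfl⟩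
  · intro k hk
    have hmemT : -stdVec n k ∈ T := by
      rw [hT]
      have h1 : -stdVec n k ∈ g '' stdSimplex ℝ ι := by
        refine ⟨fun i => if i = Sum.inr ⟨k, hk⟩ then 1 else 0,
          ⟨fun i => by dsimp only; split <;> norm_num, ?_⟩, ?_⟩
        · rw [Finset.sum_eq_single (Sum.inr ⟨k, hk⟩)] <;> simp
        · rw [hg, Fintype.linearCombination_apply]
          simp only [ite_smul, one_smul, zero_smul]
          rw [Finset.sum_ite_eq' Finset.univ (Sum.inr ⟨k, hk⟩) ψ]
          rw [hψ]; simp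
      have := Set.add_mem_add h1 ((U ⊔ E).zero_mem)
      simpa using this
    have := hfT _ hmemT
    rw [map_neg] at this
    linarith
  · intro k hk
    have hmemT : stdVec n k ∈ T := by
      rw [hT]
      have h1 : stdVec n k ∈ g '' stdSimplex ℝ ι := by
        refine ⟨fun i => if i = Sum.inl ⟨k, hk⟩ then 1 else 0,
          ⟨fun i => by dsimp only; split <;> norm_num, ?_⟩, ?_⟩
        · rw [Finset.sum_eq_single (Sum.inl ⟨k, hk⟩)] <;> simp
        · rw [hg, Fintype.linearCombination_apply]
          simp only [ite_smul, one_smul, zero_smul]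
          rw [Finset.sum_ite_eq' Finset.univ (Sum.inl ⟨k, hk⟩) ψ]
          rw [hψ]; simp
      have := Set.add_mem_add h1 ((U ⊔ E).zero_mem)
      simpa using this
    have := hfT _ hmemT
    linarith
  · rw [← map_sum, sum_stdVec, map_zero]
  · intro j
    have hcol : (fun i : Fin n => A i j) ∈ E := by
      rw [← hAspan]
      exact Submodule.subset_span ⟨j, rfl⟩
    have hcoleq : (fun i : Fin n => A i j) = ∑ i : Fin n, A i j • stdVec n i.succ := by
      funext i'
      rw [Finset.sum_apply]
      simp only [stdVec_succ, Pi.smul_apply, Pi.single_apply, smul_eq_mul, mul_ite, mul_one,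
        mul_zero]
      rw [Finset.sum_ite_eq Finset.univ i' (fun i => A i j)]
      simp
    have hfcol : f (fun i : Fin n => A i j) = 0 :=
      hfsub _ (Submodule.mem_sup_right hcol)
    rw [hcoleq, map_sum] at hfcol
    rw [← hfcol]
    exact Finset.sum_congr rfl (fun i _ => by rw [map_smul]; simp [mul_comm])

lemma mem_interior_hull {m n : ℕ} (hmn : 2*m ≤ n) {ℰ : Set (Finset (Fin (n+1)))}
    {E : Submodule ℝ (Fin n → ℝ)} (hdim : Module.finrank ℝ E = 2*m)
    (hinj : Set.InjOn E.mkQ (⋃ P ∈ ℰ, sigmaCone P)) {P : Finset (Fin (n+1))} (hP : P ∈ ℰ)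
    (hcard : P.card = 2*m+1) {A : Fin n → Fin (2 * m) → ℝ}
    (hAspan : Submodule.span ℝ (Set.range fun j : Fin (2 * m) => fun i : Fin n => A i j) = E)
    (c : Fin (n+1) → ℝ) (hcpos : ∀ k ∈ P, 0 < c k) (hcP : ∀ k, k ∉ P → c k = 0)
    (hcsum : ∑ k : Fin (n+1), c k = 1) :
    (∑ k : Fin (n+1), c k • formsOf m n A k)
      ∈ interior (convexHull ℝ (formsOf m n A '' ↑P)) := by
  classical
  have hAI := forms_affine_indep hmn hdim hinj hP hcard hAspan
  have hfr : Module.finrank ℝ (Fin m → ℂ) = 2*m := by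
    rw [Module.finrank_pi_fintype, Finset.sum_congr rfl
      (fun i _ => Complex.finrank_real_complex)]
    simp [mul_comm]
  have hcardP : Fintype.card {k : Fin (n+1) // k ∈ P} = Module.finrank ℝ (Fin m → ℂ) + 1 := by
    rw [hfr, Fintype.card_coe, hcard]
  have htot : affineSpan ℝ (Set.range fun k : {k : Fin (n+1) // k ∈ P} =>
      formsOf m n A k.val) = ⊤ :=
    hAI.affineSpan_eq_top_iff_card_eq_finrank_add_one.mpr hcardP
  set B : AffineBasis {k : Fin (n+1) // k ∈ P} ℝ (Fin m → ℂ) := ⟨_, hAI, htot⟩ with hBdef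
  have hrange : Set.range (fun k : {k : Fin (n+1) // k ∈ P} => formsOf m n A k.val)
      = formsOf m n A '' ↑P := by
    rw [show (fun k : {k : Fin (n+1) // k ∈ P} => formsOf m n A k.val)
      = formsOf m n A ∘ (fun k : {k : Fin (n+1) // k ∈ P} => (k.val : Fin (n+1))) from rfl,
      Set.range_comp, Subtype.range_coe_subtype, Finset.setOf_mem]
  have hcdite : c = fun k => if h : k ∈ P then c k else 0 := by
    funext k
    by_cases h : k ∈ P
    · simp [h]
    · simp [h, hcP k h]
  set w : {k : Fin (n+1) // k ∈ P} → ℝ := fun e => c e.val with hw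
  have hwsum : ∑ e : {k : Fin (n+1) // k ∈ P}, w e = 1 := by
    have h1 : ∑ k : Fin (n+1), c k • (1:ℝ) = ∑ e : {k : Fin (n+1) // k ∈ P}, w e • (1:ℝ) := by
      rw [hcdite, sum_extend (fun e : {k : Fin (n+1) // k ∈ P} => c e.val) (fun _ => (1:ℝ))]
    simp only [smul_eq_mul, mul_one] at h1
    rw [← h1, hcsum]
  have hy : ∑ k : Fin (n+1), c k • formsOf m n A k
      = Finset.univ.affineCombination ℝ (fun k : {k : Fin (n+1) // k ∈ P} =>
          formsOf m n A k.val) w := by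
    rw [Finset.affineCombination_eq_linear_combination _ _ _ hwsum]
    rw [hcdite, sum_extend (fun e : {k : Fin (n+1) // k ∈ P} => c e.val)
      (formsOf m n A)]
  have hfun : (fun k : {k : Fin (n+1) // k ∈ P} => formsOf m n A k.val) = ⇑B := rfl
  have hrange2 : Set.range ⇑B = formsOf m n A '' ↑P := hrange
  rw [← hrange2, B.interior_convexHull]
  simp only [Set.mem_setOf_eq]
  intro i
  rw [hy, hfun, B.coord_apply_combination_of_mem (Finset.mem_univ i) hwsum]
  exact hcpos i.val i.prop

lemma imbrication {m n : ℕ} (hmn : 2*m ≤ n) {ℰ : Set (Finset (Fin (n+1)))}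
    (hcard : ∀ P ∈ ℰ, P.card = 2*m+1) {E : Submodule ℝ (Fin n → ℝ)}
    (hdim : Module.finrank ℝ E = 2*m)
    (hinj : Set.InjOn E.mkQ (⋃ P ∈ ℰ, sigmaCone P))
    {A : Fin n → Fin (2 * m) → ℝ}
    (hAspan : Submodule.span ℝ (Set.range fun j : Fin (2 * m) => fun i : Fin n => A i j) = E)
    {P Q : Finset (Fin (n+1))} (hP : P ∈ ℰ) (hQ : Q ∈ ℰ) :
    (interior (convexHull ℝ (formsOf m n A '' ↑P)) ∩
      interior (convexHull ℝ (formsOf m n A '' ↑Q))).Nonempty := by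
  classical
  have hPne : P.Nonempty := Finset.card_pos.mp (by rw [hcard P hP]; omega)
  obtain ⟨t, ht0, htP, htQ, htsum, htA⟩ : ∃ t : Fin (n+1) → ℝ,
      (∀ k, k ∉ P ∪ Q → t k = 0) ∧ (∀ k ∈ P \ Q, 0 < t k) ∧
      (∀ k ∈ Q \ P, t k < 0) ∧ (∑ k : Fin (n+1), t k = 0) ∧
      (∀ j : Fin (2*m), ∑ i : Fin n, t i.succ * A i j = 0) := by
    by_cases hPQ : P = Q
    · refine ⟨0, fun _ _ => rfl, ?_, ?_, by simp, by simp⟩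
      · intro k hk; rw [hPQ] at hk; simp at hk
      · intro k hk; rw [hPQ] at hk; simp at hk
    · exact exists_sep_t hmn hcard hdim hinj hAspan hP hQ hPQ
  set c : Fin (n+1) → ℝ := fun k => max (t k) 0 + (if k ∈ P ∩ Q then 1 else 0) with hc
  set c' : Fin (n+1) → ℝ := fun k => max (-t k) 0 + (if k ∈ P ∩ Q then 1 else 0) with hc'
  have hcc' : ∀ k, c k - c' k = t k := by
    intro k; rw [hc, hc']; dsimp only
    have := max_zero_sub_max_neg_zero_eq_self (t k)
    linarith
  have hc0 : ∀ k, 0 ≤ c k := fun k => add_nonneg (le_max_right _ _) (by positivity)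
  have hc'0 : ∀ k, 0 ≤ c' k := fun k => add_nonneg (le_max_right _ _) (by positivity)
  have hcP0 : ∀ k, k ∉ P → c k = 0 := by
    intro k hk
    have h1 : t k ≤ 0 := by
      by_cases hkQ : k ∈ Q
      · exact (htQ k (Finset.mem_sdiff.mpr ⟨hkQ, hk⟩)).le
      · rw [ht0 k (by simp [hk, hkQ])]
    have h2 : k ∉ P ∩ Q := fun hmem => hk (Finset.mem_inter.mp hmem).1
    rw [hc]; dsimp only
    rw [if_neg h2, max_eq_right h1]
    simp
  have hc'Q0 : ∀ k, k ∉ Q → c' k = 0 := by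
    intro k hk
    have h1 : -t k ≤ 0 := by
      by_cases hkP : k ∈ P
      · have := htP k (Finset.mem_sdiff.mpr ⟨hkP, hk⟩); linarith
      · rw [ht0 k (by simp [hk, hkP])]; simp
    have h2 : k ∉ P ∩ Q := fun hmem => hk (Finset.mem_inter.mp hmem).2
    rw [hc']; dsimp only
    rw [if_neg h2, max_eq_right h1]
    simp
  have hcpos : ∀ k ∈ P, 0 < c k := by
    intro k hk
    rw [hc]; dsimp only
    by_cases hkQ : k ∈ Q
    · rw [if_pos (Finset.mem_inter.mpr ⟨hk, hkQ⟩)]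
      have := le_max_right (t k) 0; linarith
    · rw [if_neg (fun hmem => hkQ (Finset.mem_inter.mp hmem).2)]
      have h1 := htP k (Finset.mem_sdiff.mpr ⟨hk, hkQ⟩)
      have h2 := le_max_left (t k) 0
      linarith
  have hc'pos : ∀ k ∈ Q, 0 < c' k := by
    intro k hk
    rw [hc']; dsimp only
    by_cases hkP : k ∈ P
    · rw [if_pos (Finset.mem_inter.mpr ⟨hkP, hk⟩)]
      have := le_max_right (-t k) 0; linarith
    · rw [if_neg (fun hmem => hkP (Finset.mem_inter.mp hmem).1)]
      have h1 := htQ k (Finset.mem_sdiff.mpr ⟨hk, hkP⟩)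
      have h2 := le_max_left (-t k) 0
      linarith
  set M : ℝ := ∑ k : Fin (n+1), c k with hM
  have hMpos : 0 < M := by
    obtain ⟨p, hp⟩ := hPne
    exact Finset.sum_pos' (fun k _ => hc0 k) ⟨p, Finset.mem_univ p, hcpos p hp⟩
  have hsum' : ∑ k : Fin (n+1), c' k = M := by
    rw [hM]
    have : ∑ k : Fin (n+1), (c k - c' k) = 0 := by
      rw [Finset.sum_congr rfl (fun k _ => hcc' k), htsum]
    rw [Finset.sum_sub_distrib] at this
    linarith
  have hLeq : ∑ k : Fin (n+1), c k • formsOf m n A k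
      = ∑ k : Fin (n+1), c' k • formsOf m n A k := by
    rw [← sub_eq_zero, ← Finset.sum_sub_distrib]
    have : ∀ k : Fin (n+1), c k • formsOf m n A k - c' k • formsOf m n A k
        = t k • formsOf m n A k := by
      intro k; rw [← sub_smul, hcc']
    rw [Finset.sum_congr rfl (fun k _ => this k)]
    exact forms_sum_zero_of A t htA
  -- normalized weights
  set cN : Fin (n+1) → ℝ := fun k => c k / M with hcN
  set c'N : Fin (n+1) → ℝ := fun k => c' k / M with hc'N
  have hcNsum : ∑ k : Fin (n+1), cN k = 1 := by
    rw [hcN]; dsimp only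
    rw [← Finset.sum_div, ← hM, div_self hMpos.ne']
  have hc'Nsum : ∑ k : Fin (n+1), c'N k = 1 := by
    rw [hc'N]; dsimp only
    rw [← Finset.sum_div, hsum', div_self hMpos.ne']
  have hyP := mem_interior_hull hmn hdim hinj hP (hcard P hP) hAspan cN
    (fun k hk => div_pos (hcpos k hk) hMpos)
    (fun k hk => by rw [hcN]; dsimp only; rw [hcP0 k hk, zero_div]) hcNsum
  have hyQ := mem_interior_hull hmn hdim hinj hQ (hcard Q hQ) hAspan c'N
    (fun k hk => div_pos (hc'pos k hk) hMpos)
    (fun k hk => by rw [hc'N]; dsimp only; rw [hc'Q0 k hk, zero_div]) hc'Nsum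
  have hyy : ∑ k : Fin (n+1), cN k • formsOf m n A k
      = ∑ k : Fin (n+1), c'N k • formsOf m n A k := by
    rw [hcN, hc'N]; dsimp only
    have h1 : ∀ (d : Fin (n+1) → ℝ) (k : Fin (n+1)),
        (d k / M) • formsOf m n A k = M⁻¹ • (d k • formsOf m n A k) := by
      intro d k; rw [div_eq_inv_mul, mul_smul]
    rw [Finset.sum_congr rfl (fun k _ => h1 c k), Finset.sum_congr rfl (fun k _ => h1 c' k),
      ← Finset.smul_sum, ← Finset.smul_sum, hLeq]
  exact ⟨_, hyP, hyy ▸ hyQ⟩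


/-- From a toric datum `(ℰ, E)` — where the projection `π : ℝⁿ → ℝⁿ/E` is
injective on `⋃_{P∈ℰ} σ_P` and the projected fan is complete — and a matrix `A` whose columns
form a basis of `E`, the resulting pair `(ℒ, ℰ)` satisfies the SEP and the imbrication
condition, i.e. it is an LVMB datum. -/
theorem toric_datum_gives_lvmb_datum (m n : ℕ) (hm : 1 ≤ m) (hmn : 2 * m ≤ n)
    (ℰ : Set (Finset (Fin (n + 1))))
    (hcard : ∀ P ∈ ℰ, P.card = 2 * m + 1)
    (E : Submodule ℝ (Fin n → ℝ))
    (hdim : Module.finrank ℝ E = 2 * m)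
    -- (a) the projection is injective on the support of the fan
    (hinj : Set.InjOn E.mkQ (⋃ P ∈ ℰ, sigmaCone P))
    -- (b) the projected fan is complete
    (hcompl : (⋃ P ∈ ℰ, E.mkQ '' sigmaCone P) = Set.univ)
    -- the columns of `A` form a basis of `E`
    (A : Fin n → Fin (2 * m) → ℝ)
    (hAindep : LinearIndependent ℝ (fun j : Fin (2 * m) => fun i : Fin n => A i j))
    (hAspan : Submodule.span ℝ (Set.range fun j : Fin (2 * m) => fun i : Fin n => A i j) = E) :
    (∀ P ∈ ℰ, ∀ i : Fin (n + 1), ∃ j ∈ P, insert i (P.erase j) ∈ ℰ) ∧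
    (∀ P ∈ ℰ, ∀ Q ∈ ℰ,
      (interior (convexHull ℝ (formsOf m n A '' ↑P)) ∩
        interior (convexHull ℝ (formsOf m n A '' ↑Q))).Nonempty) := by
  constructor
  · exact sep_lemma hmn hcard hdim hinj hcompl
  · intro P hP Q hQ
    exact imbrication hmn hcard hdim hinj hAspan hP hQ
end

section
/- Fix integers m ≥ 1 and n with 2m ≤ n. Let ℰ be a nonempty family of subsets of {0, …, n}, each of cardinality 2m+1, satisfying the SEP. Assume that every index in {0, …, 2m−1} is indispensable, i.e. {0, …, 2m−1} ⊆ P for every P ∈ ℰ. Then ℰ = { {0, …, 2m−1} ∪ {j} : j ∈ {2m, …, n} }. -/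
/-- If `ℰ` is a nonempty family of `(2m+1)`-element subsets of `{0,…,n}`
satisfying the SEP, and every index in `{0,…,2m−1}` is indispensable, then
`ℰ = { {0,…,2m−1} ∪ {j} : j ∈ {2m,…,n} }`. -/
theorem sep_with_2m_indispensable (m n : ℕ) (hm : 1 ≤ m) (hmn : 2 * m ≤ n)
    (ℰ : Set (Finset (Fin (n + 1))))
    (hne : ℰ.Nonempty)
    (hcard : ∀ P ∈ ℰ, P.card = 2 * m + 1)
    (hSEP : ∀ P ∈ ℰ, ∀ i : Fin (n + 1), ∃ j ∈ P, insert i (P.erase j) ∈ ℰ)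
    (hindisp : ∀ P ∈ ℰ, ∀ i : Fin (n + 1), (i : ℕ) < 2 * m → i ∈ P) :
    ℰ = {P : Finset (Fin (n + 1)) | ∃ j : Fin (n + 1), 2 * m ≤ (j : ℕ) ∧
      P = insert j (Finset.univ.filter fun i : Fin (n + 1) => (i : ℕ) < 2 * m)} := by
  set B : Finset (Fin (n + 1)) :=
    Finset.univ.filter fun i : Fin (n + 1) => (i : ℕ) < 2 * m with hB
  have hBcard : B.card = 2 * m := by
    have himg : B.image Fin.val = Finset.range (2 * m) := by
      ext x
      simp only [Finset.mem_image, Finset.mem_range, hB, Finset.mem_filter,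
        Finset.mem_univ, true_and]
      constructor
      · rintro ⟨a, ha, rfl⟩; exact ha
      · intro hx; exact ⟨⟨x, by omega⟩, hx, rfl⟩
    have := Finset.card_image_of_injective B Fin.val_injective
    rw [himg, Finset.card_range] at this
    omega
  have key : ∀ P ∈ ℰ, ∃ j : Fin (n + 1), 2 * m ≤ (j : ℕ) ∧ P = insert j B := by
    intro P hP
    have hBP : B ⊆ P := by
      intro i hi
      simp only [hB, Finset.mem_filter] at hi
      exact hindisp P hP i hi.2
    have hsd : (P \ B).card = 1 := by
      rw [Finset.card_sdiff_of_subset hBP, hcard P hP, hBcard]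
      omega
    obtain ⟨j, hj⟩ := Finset.card_eq_one.mp hsd
    have hjmem : j ∈ P \ B := by rw [hj]; exact Finset.mem_singleton_self j
    have hjB : j ∉ B := (Finset.mem_sdiff.mp hjmem).2
    refine ⟨j, ?_, ?_⟩
    · simp only [hB, Finset.mem_filter, Finset.mem_univ, true_and] at hjB
      omega
    · have : B ∪ (P \ B) = P := Finset.union_sdiff_of_subset hBP
      rw [← this, hj]
      ext x
      simp [Finset.mem_insert, Finset.mem_union, or_comm]
  ext P
  simp only [Set.mem_setOf_eq]
  constructor
  · exact key P
  · rintro ⟨j, hjm, rfl⟩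
    obtain ⟨P₀, hP₀⟩ := hne
    obtain ⟨k, _, hQ⟩ := hSEP P₀ hP₀ j
    obtain ⟨j', hj'm, hj'⟩ := key _ hQ
    have hjQ : j ∈ insert j (P₀.erase k) := Finset.mem_insert_self _ _
    rw [hj'] at hQ hjQ
    have : j = j' := by
      rcases Finset.mem_insert.mp hjQ with h | h
      · exact h
      · exfalso
        simp only [hB, Finset.mem_filter, Finset.mem_univ, true_and] at h
        omega
    rw [this]
    exact hQ
end

section
/- Let (ℒ, ℰ) be an LVMB datum and assume it has 2m indispensable indices, i.e. there exists a set S ⊆ {0, …, n} with |S| = 2m such that S ⊆ P for every P ∈ ℰ. Then ⋂_{P∈ℰ} int(conv{ℓ_k : k ∈ P}) ≠ ∅; in other words, (ℒ, ℰ) is an LVM datum. -/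
open Filter Set AffineMap Topology

/-- An LVMB datum with `2m` indispensable indices is an LVM datum: the
interiors of the convex hulls `conv ℒ_P`, `P ∈ ℰ`, have a common point. -/
theorem lvmb_with_2m_indispensable_is_lvm (m n : ℕ) (hm : 1 ≤ m) (hmn : 2 * m ≤ n)
    (ℓ : Fin (n + 1) → (Fin m → ℂ))
    (ℰ : Set (Finset (Fin (n + 1))))
    -- every subfamily of `2m+1` of the `ℓ i` is an ℝ-affine basis of `(ℂ^m)*`
    (hbasis : ∀ T : Finset (Fin (n + 1)), T.card = 2 * m + 1 →
      AffineIndependent ℝ (fun k : T => ℓ k) ∧ affineSpan ℝ (ℓ '' ↑T) = ⊤)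
    -- each member of `ℰ` has `2m+1` elements
    (hcard : ∀ P ∈ ℰ, P.card = 2 * m + 1)
    -- the substitute existence principle (SEP)
    (hSEP : ∀ P ∈ ℰ, ∀ i : Fin (n + 1), ∃ j ∈ P, insert i (P.erase j) ∈ ℰ)
    -- the imbrication condition
    (himb : ∀ P ∈ ℰ, ∀ Q ∈ ℰ,
      (interior (convexHull ℝ (ℓ '' ↑P)) ∩ interior (convexHull ℝ (ℓ '' ↑Q))).Nonempty)
    -- there are `2m` indispensable indices
    (S : Finset (Fin (n + 1))) (hScard : S.card = 2 * m) (hSindisp : ∀ P ∈ ℰ, S ⊆ P) :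
    (⋂ P ∈ ℰ, interior (convexHull ℝ (ℓ '' ↑P))).Nonempty := by
  classical
  rcases ℰ.eq_empty_or_nonempty with hE | ⟨P₀, hP₀⟩
  · simp [hE]
  -- each `P ∈ ℰ` consists of `S` plus one extra element, its "apex"
  have hapex : ∀ P ∈ ℰ, ∃ i, i ∈ P ∧ i ∉ S ∧ ∀ k ∈ P, k ≠ i → k ∈ S := by
    intro P hP
    have hSP := hSindisp P hP
    have h1 : (P \ S).card = 1 := by
      rw [Finset.card_sdiff_of_subset hSP, hcard P hP, hScard]; omega
    obtain ⟨i, hi⟩ := Finset.card_eq_one.mp h1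
    have hiPS : i ∈ P \ S := by simp [hi]
    refine ⟨i, (Finset.mem_sdiff.mp hiPS).1, (Finset.mem_sdiff.mp hiPS).2, ?_⟩
    intro k hk hki
    by_contra hkS
    have : k ∈ P \ S := Finset.mem_sdiff.mpr ⟨hk, hkS⟩
    rw [hi] at this
    exact hki (Finset.mem_singleton.mp this)
  choose apex hapexP hapexS hapexU using hapex
  -- affine bases
  have hrange : ∀ P : Finset (Fin (n + 1)),
      Set.range (fun k : P => ℓ k) = ℓ '' ↑P := by
    intro P; ext x; simp
  have hBex : ∀ P ∈ ℰ, ∃ B : AffineBasis P ℝ (Fin m → ℂ), ∀ k : P, B k = ℓ k := by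
    intro P hP
    obtain ⟨hind, hspan⟩ := hbasis P (hcard P hP)
    exact ⟨⟨fun k : P => ℓ k, hind, by rw [hrange]; exact hspan⟩, fun k => rfl⟩
  choose B hB using hBex
  have hint : ∀ P (hP : P ∈ ℰ), interior (convexHull ℝ (ℓ '' ↑P))
      = {x | ∀ j : P, 0 < (B P hP).coord j x} := by
    intro P hP
    have hr : Set.range (B P hP) = ℓ '' ↑P := by
      rw [show ⇑(B P hP) = fun k : P => ℓ k from funext (hB P hP), hrange P]
    rw [← hr, (B P hP).interior_convexHull]
  -- the centroid of the indispensable points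
  set b : Fin m → ℂ := S.centroid ℝ ℓ with hbdef
  have hSne : S.Nonempty := Finset.card_pos.mp (by rw [hScard]; omega)
  have hw : S.sum (S.centroidWeights ℝ) = 1 :=
    S.sum_centroidWeights_eq_one_of_nonempty ℝ hSne
  have hcardpos : (0:ℝ) < (S.card : ℝ)⁻¹ := by
    rw [hScard]; apply inv_pos.mpr; exact_mod_cast (by omega : 0 < 2 * m)
  -- barycentric coordinates of the centroid
  have hcoordb : ∀ P (hP : P ∈ ℰ) (j : P), (B P hP).coord j b
      = if (j : Fin (n + 1)) ∈ S then (S.card : ℝ)⁻¹ else 0 := by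
    intro P hP j
    rw [hbdef, Finset.centroid_def,
      Finset.map_affineCombination S ℓ _ hw ((B P hP).coord j),
      Finset.affineCombination_eq_linear_combination _ _ _ hw]
    have step : ∀ k ∈ S, S.centroidWeights ℝ k • ((B P hP).coord j ∘ ℓ) k
        = if (j : Fin (n + 1)) = k then (S.card : ℝ)⁻¹ else 0 := by
      intro k hk
      have hkP : k ∈ P := hSindisp P hP hk
      have hℓk : ℓ k = (B P hP) ⟨k, hkP⟩ := (hB P hP ⟨k, hkP⟩).symm
      have : (B P hP).coord j (ℓ k) = if (j : Fin (n + 1)) = k then 1 else 0 := by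
        rw [hℓk, AffineBasis.coord_apply]
        congr 1
        simp [Subtype.ext_iff]
      simp only [Function.comp_apply, this, Finset.centroidWeights_apply]
      by_cases h : (j : Fin (n + 1)) = k <;> simp [h]
    rw [Finset.sum_congr rfl step, Finset.sum_ite_eq]
  -- the reference apex
  set a₀ : Fin m → ℂ := ℓ (apex P₀ hP₀) with ha₀def
  -- key positivity: the apex coordinate of `a₀` is positive for every `P ∈ ℰ`
  have hkey : ∀ P (hP : P ∈ ℰ),
      0 < (B P hP).coord ⟨apex P hP, hapexP P hP⟩ a₀ := by
    intro P hP
    obtain ⟨x, hx0, hxP⟩ := himb P₀ hP₀ P hP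
    rw [hint P₀ hP₀, Set.mem_setOf_eq] at hx0
    rw [hint P hP, Set.mem_setOf_eq] at hxP
    set jP : P := ⟨apex P hP, hapexP P hP⟩ with hjPdef
    set j₀ : P₀ := ⟨apex P₀ hP₀, hapexP P₀ hP₀⟩ with hj₀def
    set g : (Fin m → ℂ) →ᵃ[ℝ] ℝ := (B P hP).coord jP with hgdef
    have hrep := (B P₀ hP₀).affineCombination_coord_eq_self x
    have hsumw : Finset.univ.sum (fun i => (B P₀ hP₀).coord i x) = 1 :=
      (B P₀ hP₀).sum_coord_apply_eq_one x
    have hg : Finset.univ.affineCombination ℝ (g ∘ (B P₀ hP₀))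
        (fun i => (B P₀ hP₀).coord i x) = g x := by
      rw [← Finset.map_affineCombination _ _ _ hsumw g, hrep]
    rw [Finset.affineCombination_eq_linear_combination _ _ _ hsumw] at hg
    have hzero : ∀ i : P₀, i ≠ j₀ →
        (B P₀ hP₀).coord i x • (g ∘ (B P₀ hP₀)) i = 0 := by
      intro i hi
      have hiS : (i : Fin (n + 1)) ∈ S :=
        hapexU P₀ hP₀ i i.2 (fun h => hi (Subtype.ext h))
      have hiP : (i : Fin (n + 1)) ∈ P := hSindisp P hP hiS
      have hBi : (B P₀ hP₀) i = (B P hP) ⟨i, hiP⟩ := by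
        rw [hB P₀ hP₀ i, hB P hP ⟨i, hiP⟩]
      have : g ((B P₀ hP₀) i) = 0 := by
        rw [hBi, hgdef]
        apply AffineBasis.coord_apply_ne
        intro h
        apply hapexS P hP
        have : apex P hP = (i : Fin (n + 1)) := congrArg Subtype.val h
        rw [this]; exact hiS
      simp [Function.comp_apply, this]
    have hsum : (Finset.univ.sum fun i : P₀ =>
        (B P₀ hP₀).coord i x • (g ∘ (B P₀ hP₀)) i)
        = (B P₀ hP₀).coord j₀ x • g a₀ := by
      rw [Fintype.sum_eq_single j₀ hzero]
      congr 1
      simp only [Function.comp_apply]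
      rw [hB P₀ hP₀ j₀]
    rw [hsum] at hg
    have h1 : 0 < g x := hxP jP
    have h2 : 0 < (B P₀ hP₀).coord j₀ x := hx0 j₀
    have h3 : (B P₀ hP₀).coord j₀ x * g a₀ = g x := by rwa [smul_eq_mul] at hg
    nlinarith
  -- the candidate points: `b + ε (a₀ - b)` for small `ε > 0`
  have hev : ∀ P ∈ ℰ, ∀ᶠ ε in 𝓝[>] (0:ℝ),
      AffineMap.lineMap b a₀ ε ∈ interior (convexHull ℝ (ℓ '' ↑P)) := by
    intro P hP
    simp only [hint P hP, Set.mem_setOf_eq]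
    rw [eventually_all]
    intro j
    by_cases hj : j = (⟨apex P hP, hapexP P hP⟩ : P)
    · subst hj
      have h0 : (B P hP).coord ⟨apex P hP, hapexP P hP⟩ b = 0 := by
        rw [hcoordb]; simp [hapexS P hP]
      filter_upwards [self_mem_nhdsWithin] with ε hε
      rw [AffineMap.apply_lineMap, AffineMap.lineMap_apply_module, h0]
      simp only [smul_zero, zero_add, smul_eq_mul, mul_zero]
      exact mul_pos hε (hkey P hP)
    · have hjS : (j : Fin (n + 1)) ∈ S :=
        hapexU P hP j j.2 (fun h => hj (Subtype.ext h))
      have h0 : (B P hP).coord j b = (S.card : ℝ)⁻¹ := by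
        rw [hcoordb]; simp [hjS]
      have hc1 : Continuous fun ε : ℝ => (AffineMap.lineMap b a₀ : ℝ →ᵃ[ℝ] _) ε :=
        AffineMap.lineMap_continuous
      have hcont : ContinuousAt
          (fun ε : ℝ => (B P hP).coord j (AffineMap.lineMap b a₀ ε)) 0 :=
        ((continuous_barycentric_coord (B P hP) j).comp hc1).continuousAt
      have hval : (B P hP).coord j (AffineMap.lineMap b a₀ (0:ℝ)) = (S.card : ℝ)⁻¹ := by
        rw [AffineMap.lineMap_apply_zero, h0]
      have : ∀ᶠ ε in 𝓝 (0:ℝ), 0 < (B P hP).coord j (AffineMap.lineMap b a₀ ε) := by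
        have hpos : (0:ℝ) <
            (fun ε : ℝ => (B P hP).coord j (AffineMap.lineMap b a₀ ε)) 0 := by
          show (0:ℝ) < (B P hP).coord j (AffineMap.lineMap b a₀ (0:ℝ))
          rw [AffineMap.lineMap_apply_zero, h0]; exact hcardpos
        exact hcont.eventually (eventually_gt_nhds hpos) |>.mono (fun ε h => h)
      exact this.filter_mono nhdsWithin_le_nhds
  have hfin : ℰ.Finite := Set.toFinite ℰ
  obtain ⟨ε, hε⟩ := ((hfin.eventually_all).mpr hev).exists
  exact ⟨_, Set.mem_iInter₂.mpr hε⟩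
end

section
/- Let σ be a convex polyhedral cone in ℝⁿ, let v ∈ ℝⁿ with v ∉ σ, let y ∈ ℝⁿ and ε > 0, and let B_ε denote the open ball of radius ε around 0. Then the set (y + B_ε + σ) ∩ ℝ_{≥0}·v is bounded; equivalently, the set {t ∈ ℝ : t ≥ 0 and t·v ∈ y + B_ε + σ} is bounded. -/
open Pointwise

/-- A convex polyhedral cone with apex at the origin in `ℝⁿ`: the set of nonnegative
combinations of finitely many vectors, containing no line through the origin. -/
def IsPolyhedralCone {n : ℕ} (σ : Set (EuclideanSpace ℝ (Fin n))) : Prop :=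
  (∃ (r : ℕ) (v : Fin r → EuclideanSpace ℝ (Fin n)),
    σ = {x | ∃ c : Fin r → ℝ, (∀ i, 0 ≤ c i) ∧ x = ∑ i, c i • v i}) ∧
  σ ∩ (-σ) = {0}

section Aux

variable {n : ℕ}

local notation "V" => EuclideanSpace ℝ (Fin n)

/-- Carathéodory for cones: any nonnegative combination over a finset `s` is a nonnegative
combination over a subset `t ⊆ s` on which the vectors are linearly independent. -/
lemma cone_caratheodory {R : ℕ} (v : Fin R → V) (s : Finset (Fin R)) :
    ∀ c : Fin R → ℝ, (∀ i, 0 ≤ c i) →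
    ∃ t : Finset (Fin R), t ⊆ s ∧ LinearIndependent ℝ (fun i : t => v i) ∧
      ∃ c' : Fin R → ℝ, (∀ i, 0 ≤ c' i) ∧ ∑ i ∈ s, c i • v i = ∑ i ∈ t, c' i • v i := by
  classical
  induction s using Finset.strongInduction with
  | _ s ih =>
    intro c hc
    by_cases hli : LinearIndependent ℝ (fun i : s => v i)
    · exact ⟨s, Finset.Subset.refl s, hli, c, hc, rfl⟩
    · obtain ⟨g, hg0, i₁, hi₁⟩ := Fintype.not_linearIndependent_iff.mp hli
      -- extend `g` (or `-g`) to a function `e` on `Fin R` vanishing outside `s`,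
      -- with a positive value somewhere on `s`
      have key : ∃ e : Fin R → ℝ, (∀ i ∉ s, e i = 0) ∧ (∑ i ∈ s, e i • v i = 0) ∧
          ∃ i ∈ s, 0 < e i := by
        rcases lt_or_ge 0 (g i₁) with hpos | hneg
        · refine ⟨fun i => if h : i ∈ s then g ⟨i, h⟩ else 0, fun i hi => dif_neg hi, ?_, ?_⟩
          · rw [← Finset.sum_coe_sort s (fun i => (if h : i ∈ s then g ⟨i, h⟩ else 0) • v i)]
            simpa using hg0
          · exact ⟨i₁, i₁.2, by simpa using hpos⟩
        · refine ⟨fun i => if h : i ∈ s then -g ⟨i, h⟩ else 0, fun i hi => dif_neg hi, ?_, ?_⟩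
          · rw [← Finset.sum_coe_sort s (fun i => (if h : i ∈ s then -g ⟨i, h⟩ else 0) • v i)]
            simpa [neg_smul] using hg0
          · refine ⟨i₁, i₁.2, ?_⟩
            simp only [i₁.2, dif_pos]
            have : g i₁ < 0 := lt_of_le_of_ne hneg hi₁
            simpa using this
      obtain ⟨e, he0, hesum, ie, hie, hiepos⟩ := key
      set P : Finset (Fin R) := s.filter (fun i => 0 < e i) with hP
      have hPne : P.Nonempty := ⟨ie, Finset.mem_filter.mpr ⟨hie, hiepos⟩⟩
      obtain ⟨i₀, hi₀P, hi₀min⟩ := Finset.exists_min_image P (fun i => c i / e i) hPne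
      have hi₀s : i₀ ∈ s := (Finset.mem_filter.mp hi₀P).1
      have hi₀pos : 0 < e i₀ := (Finset.mem_filter.mp hi₀P).2
      set τ : ℝ := c i₀ / e i₀ with hτ
      have hτ0 : 0 ≤ τ := div_nonneg (hc i₀) hi₀pos.le
      set c' : Fin R → ℝ := fun i => c i - τ * e i with hc'
      have hc'nonneg : ∀ i, 0 ≤ c' i := by
        intro i
        by_cases his : i ∈ s
        · rcases le_or_gt (e i) 0 with hei | hei
          · have : τ * e i ≤ 0 := mul_nonpos_of_nonneg_of_nonpos hτ0 hei
            simp only [hc']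
            linarith [hc i]
          · have hiP : i ∈ P := Finset.mem_filter.mpr ⟨his, hei⟩
            have hmin : τ ≤ c i / e i := hi₀min i hiP
            have : τ * e i ≤ c i := (le_div_iff₀ hei).mp hmin
            simp only [hc']
            linarith
        · simp only [hc', he0 i his, mul_zero, sub_zero]
          exact hc i
      have hc'i₀ : c' i₀ = 0 := by
        simp only [hc', hτ]
        field_simp
        ring
      have hsum : ∑ i ∈ s, c i • v i = ∑ i ∈ s, c' i • v i := by
        simp only [hc', sub_smul, smul_smul, Finset.sum_sub_distrib, ← Finset.smul_sum]
        rw [show (∑ i ∈ s, (τ * e i) • v i) = τ • ∑ i ∈ s, e i • v i by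
          rw [Finset.smul_sum]; exact Finset.sum_congr rfl fun i _ => (smul_smul τ (e i) (v i)).symm]
        rw [hesum, smul_zero, sub_zero]
      have herase : ∑ i ∈ s, c' i • v i = ∑ i ∈ s.erase i₀, c' i • v i := by
        rw [Finset.sum_erase s (by rw [hc'i₀, zero_smul])]
      obtain ⟨t, hts, htli, c'', hc''nonneg, hc''sum⟩ :=
        ih (s.erase i₀) (Finset.erase_ssubset hi₀s) c' hc'nonneg
      exact ⟨t, hts.trans (Finset.erase_subset i₀ s), htli, c'', hc''nonneg,
        by rw [hsum, herase, hc''sum]⟩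

/-- The cone over a linearly independent subfamily is closed. -/
lemma cone_closed_of_li {R : ℕ} (v : Fin R → V) (t : Finset (Fin R))
    (hli : LinearIndependent ℝ (fun i : t => v i)) :
    IsClosed {x : V | ∃ c : Fin R → ℝ, (∀ i, 0 ≤ c i) ∧ x = ∑ i ∈ t, c i • v i} := by
  classical
  set T : (↥t → ℝ) →ₗ[ℝ] V :=
    { toFun := fun c => ∑ i : t, c i • v i
      map_add' := by
        intro a b
        simp [add_smul, Finset.sum_add_distrib]
      map_smul' := by
        intro m a
        simp [smul_smul, Finset.smul_sum] } with hT
  have hker : LinearMap.ker T = ⊥ := by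
    rw [LinearMap.ker_eq_bot']
    intro g hg
    have := Fintype.linearIndependent_iff.mp hli g hg
    funext i
    exact this i
  obtain ⟨K, hK0, hK⟩ := T.exists_antilipschitzWith hker
  have hcont : UniformContinuous T := T.toContinuousLinearMap.uniformContinuous
  have hmap : IsClosedMap T := (hK.isClosedEmbedding hcont).isClosedMap
  have hO : IsClosed {c : ↥t → ℝ | ∀ i, 0 ≤ c i} := by
    have : {c : ↥t → ℝ | ∀ i, 0 ≤ c i} = ⋂ i, {c : ↥t → ℝ | 0 ≤ c i} := by
      ext c; simp [Set.mem_iInter]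
    rw [this]
    exact isClosed_iInter fun i => isClosed_le continuous_const (continuous_apply i)
  have hset : {x : V | ∃ c : Fin R → ℝ, (∀ i, 0 ≤ c i) ∧ x = ∑ i ∈ t, c i • v i}
      = T '' {c : ↥t → ℝ | ∀ i, 0 ≤ c i} := by
    ext x
    constructor
    · rintro ⟨c, hc, rfl⟩
      refine ⟨fun i => c i, fun i => hc i, ?_⟩
      show (∑ i : t, c i • v i) = ∑ i ∈ t, c i • v i
      exact Finset.sum_coe_sort t (fun i => c i • v i)
    · rintro ⟨c, hc, rfl⟩
      refine ⟨fun i => if h : i ∈ t then c ⟨i, h⟩ else 0, ?_, ?_⟩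
      · intro i
        by_cases h : i ∈ t
        · simpa [h] using hc ⟨i, h⟩
        · simp [h]
      · show (∑ i : t, c i • v i) = _
        rw [← Finset.sum_coe_sort t
          (fun i => (if h : i ∈ t then c ⟨i, h⟩ else 0) • v i)]
        exact Finset.sum_congr rfl fun i _ => by simp
  rw [hset]
  exact hmap _ hO

/-- A finitely generated cone is closed. -/
lemma polyhedral_closed {R : ℕ} (v : Fin R → V) :
    IsClosed {x : V | ∃ c : Fin R → ℝ, (∀ i, 0 ≤ c i) ∧ x = ∑ i, c i • v i} := by
  classical
  have hcover : {x : V | ∃ c : Fin R → ℝ, (∀ i, 0 ≤ c i) ∧ x = ∑ i, c i • v i}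
      = ⋃ t ∈ {t : Finset (Fin R) | LinearIndependent ℝ (fun i : t => v i)},
          {x : V | ∃ c : Fin R → ℝ, (∀ i, 0 ≤ c i) ∧ x = ∑ i ∈ t, c i • v i} := by
    ext x
    simp only [Set.mem_setOf_eq, Set.mem_iUnion, exists_prop]
    constructor
    · rintro ⟨c, hc, rfl⟩
      obtain ⟨t, -, htli, c', hc', hsum⟩ := cone_caratheodory v Finset.univ c hc
      exact ⟨t, htli, c', hc', hsum⟩
    · rintro ⟨t, htli, c, hc, rfl⟩
      refine ⟨fun i => if i ∈ t then c i else 0, fun i => ?_, ?_⟩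
      · by_cases h : i ∈ t <;> simp [h, hc i]
      · rw [← Finset.sum_subset (Finset.subset_univ t)
          (fun i _ hi => by simp [hi])]
        exact (Finset.sum_congr rfl fun i hi => by simp [hi]).symm
  rw [hcover]
  exact Set.Finite.isClosed_biUnion (Set.toFinite _)
    (fun t ht => cone_closed_of_li v t ht)

end Aux

/-- For a convex polyhedral cone `σ` and `v ∉ σ`, the set
`(y + B_ε + σ) ∩ ℝ_{≥0}·v` is bounded: the set of `t ≥ 0` with `t • v ∈ y + B_ε + σ`
is bounded. -/
theorem ray_inter_thickened_cone_bounded {n : ℕ}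
    (σ : Set (EuclideanSpace ℝ (Fin n))) (hσ : IsPolyhedralCone σ)
    (v : EuclideanSpace ℝ (Fin n)) (hv : v ∉ σ)
    (y : EuclideanSpace ℝ (Fin n)) (ε : ℝ) (hε : 0 < ε) :
    Bornology.IsBounded
      {t : ℝ | 0 ≤ t ∧ t • v ∈ {y} + Metric.ball (0 : EuclideanSpace ℝ (Fin n)) ε + σ} := by
  obtain ⟨⟨R, w, hw⟩, -⟩ := hσ
  have hclosed : IsClosed σ := hw ▸ polyhedral_closed w
  have hsmul : ∀ s ∈ σ, ∀ a : ℝ, 0 ≤ a → a • s ∈ σ := by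
    intro s hs a ha
    rw [hw] at hs ⊢
    obtain ⟨c, hc, rfl⟩ := hs
    exact ⟨fun i => a * c i, fun i => mul_nonneg ha (hc i),
      by rw [Finset.smul_sum]; exact Finset.sum_congr rfl fun i _ => smul_smul a (c i) (w i)⟩
  rw [isBounded_iff_bddBelow_bddAbove]
  constructor
  · exact ⟨0, fun t ht => ht.1⟩
  · by_contra hub
    have hvs : v ∈ closure σ := by
      rw [Metric.mem_closure_iff]
      intro δ hδ
      obtain ⟨t, ht, htgt⟩ := not_bddAbove_iff.mp hub (max 1 ((‖y‖ + ε) / δ))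
      have ht1 : (1 : ℝ) < t := lt_of_le_of_lt (le_max_left _ _) htgt
      have htpos : (0 : ℝ) < t := lt_trans zero_lt_one ht1
      obtain ⟨-, hmem⟩ := ht
      obtain ⟨a, ha, s, hs, hadd⟩ := hmem
      obtain ⟨y', hy', b, hb, hab⟩ := ha
      rw [Set.mem_singleton_iff] at hy'
      rw [hy'] at hab
      rw [Metric.mem_ball, dist_zero_right] at hb
      -- t • v = y + b + s
      have heq : s = t • v - y - b := by
        rw [← hadd, ← hab]; module
      refine ⟨t⁻¹ • s, hsmul s hs t⁻¹ (inv_nonneg.mpr htpos.le), ?_⟩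
      have hdist : dist v (t⁻¹ • s) = ‖y + b‖ / t := by
        rw [heq, dist_eq_norm]
        have : v - t⁻¹ • (t • v - y - b) = t⁻¹ • (y + b) := by
          rw [smul_sub, smul_sub, smul_smul, inv_mul_cancel₀ (ne_of_gt htpos), one_smul,
            smul_add]
          abel
        rw [this, norm_smul, norm_inv, Real.norm_eq_abs, abs_of_pos htpos,
          div_eq_inv_mul]
      rw [hdist]
      have hyb : ‖y + b‖ < ‖y‖ + ε := lt_of_le_of_lt (norm_add_le y b) (by linarith)
      have htlarge : (‖y‖ + ε) / δ < t := lt_of_le_of_lt (le_max_right _ _) htgt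
      have hδt : ‖y‖ + ε < δ * t := by
        rw [div_lt_iff₀ hδ] at htlarge
        linarith
      rw [div_lt_iff₀ htpos]
      linarith
    exact hv (hclosed.closure_eq ▸ hvs)
end

section
/- Let σ and σ' be convex polyhedral cones in ℝⁿ such that τ := σ ∩ σ' is a face of σ and a face of σ', and τ ≠ σ (τ is a proper face of σ). Then there exists w ∈ L(σ) such that (w + σ) ∩ σ' = ∅. -/
open Pointwise

/-- `τ` is a face of the cone `σ`: the vanishing locus on `σ` of a linear functional which is
nonnegative on `σ`. -/
def IsFaceOf {n : ℕ} (τ σ : Set (EuclideanSpace ℝ (Fin n))) : Prop :=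
  ∃ φ : EuclideanSpace ℝ (Fin n) →ₗ[ℝ] ℝ,
    (∀ x ∈ σ, 0 ≤ φ x) ∧ τ = {x ∈ σ | φ x = 0}

/-- If `τ = σ ∩ σ'` is a face of each of the convex polyhedral cones `σ`, `σ'`
and `τ` is a proper face of `σ`, then some translate `w + σ` of `σ`, with `w ∈ L(σ)`, is
disjoint from `σ'`. -/
theorem translate_of_cone_missing_other_cone {n : ℕ}
    (σ σ' : Set (EuclideanSpace ℝ (Fin n)))
    (hσ : IsPolyhedralCone σ) (hσ' : IsPolyhedralCone σ')
    (hface : IsFaceOf (σ ∩ σ') σ) (hface' : IsFaceOf (σ ∩ σ') σ')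
    (hproper : σ ∩ σ' ≠ σ) :
    ∃ w ∈ Submodule.span ℝ σ, ({w} + σ) ∩ σ' = ∅ := by
  obtain ⟨⟨r, v, hgen⟩, -⟩ := hσ
  obtain ⟨φ, hφ0, hφτ⟩ := hface
  -- there is a point of `σ` outside the proper face `σ ∩ σ'`
  obtain ⟨v₀, hv₀σ, hv₀⟩ : ∃ x ∈ σ, x ∉ σ ∩ σ' := by
    by_contra h
    push_neg at h
    exact hproper (Set.Subset.antisymm Set.inter_subset_left h)
  -- the functional is strictly positive at `v₀`
  have hφv₀ : 0 < φ v₀ := by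
    rcases (hφ0 v₀ hv₀σ).lt_or_eq with h | h
    · exact h
    · exact absurd (by rw [hφτ]; exact ⟨hv₀σ, h.symm⟩) hv₀
  -- `σ` is closed under addition
  have hadd : ∀ x ∈ σ, ∀ y ∈ σ, x + y ∈ σ := by
    intro x hx y hy
    rw [hgen] at hx hy ⊢
    obtain ⟨c, hc, hxc⟩ := hx
    obtain ⟨d, hd, hyd⟩ := hy
    exact ⟨c + d, fun i => add_nonneg (hc i) (hd i), by
      simp [hxc, hyd, add_smul, Finset.sum_add_distrib]⟩
  refine ⟨v₀, Submodule.subset_span hv₀σ, ?_⟩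
  ext x
  simp only [Set.mem_inter_iff, Set.mem_empty_iff_false, iff_false, not_and]
  rintro ⟨a, ha, s, hs, rfl⟩ hx'
  rw [Set.mem_singleton_iff] at ha
  subst ha
  have hmem : a + s ∈ σ ∩ σ' := ⟨hadd a hv₀σ s hs, hx'⟩
  rw [hφτ] at hmem
  have : φ (a + s) = 0 := hmem.2
  rw [map_add] at this
  linarith [hφ0 s hs]
end

section
/- Let σ and σ' be convex polyhedral cones in ℝⁿ, let w ∈ ℝⁿ be such that (w + σ) ∩ σ' = ∅, and let K ⊆ ℝⁿ be a compact set. Then there exists λ₀ > 0 such that for every λ ≥ λ₀ the sets K + λ·w + σ and K + σ' are disjoint. -/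
open Pointwise

section Aux
variable {E : Type*} [NormedAddCommGroup E] [NormedSpace ℝ E] [FiniteDimensional ℝ E]

/-- The cone generated by finitely many vectors. -/
def coneSet {r : ℕ} (v : Fin r → E) : Set E :=
  {x | ∃ c : Fin r → ℝ, (∀ i, 0 ≤ c i) ∧ x = ∑ i, c i • v i}

def combMap {r : ℕ} (v : Fin r → E) : (Fin r → ℝ) →ₗ[ℝ] E where
  toFun c := ∑ i, c i • v i
  map_add' a b := by simp [add_smul, Finset.sum_add_distrib]
  map_smul' t a := by simp [smul_smul, Finset.smul_sum]

lemma reduce_step {r : ℕ} (v : Fin (r + 1) → E) (e : Fin (r + 1) → ℝ)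
    (he : ∑ i, e i • v i = 0) (i₀ : Fin (r + 1)) (hi₀ : 0 < e i₀)
    (c : Fin (r + 1) → ℝ) (hc : ∀ i, 0 ≤ c i) :
    ∃ i₁ : Fin (r + 1), (∑ i, c i • v i) ∈ coneSet (fun j => v (i₁.succAbove j)) := by
  classical
  set S : Finset (Fin (r + 1)) := Finset.univ.filter (fun i => 0 < e i) with hS
  have hSne : S.Nonempty := ⟨i₀, by simp [hS, hi₀]⟩
  obtain ⟨i₁, hi₁S, hi₁⟩ := Finset.exists_mem_eq_inf' hSne (fun i => c i / e i)
  set t : ℝ := S.inf' hSne (fun i => c i / e i) with ht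
  have hei₁ : 0 < e i₁ := by simpa [hS] using hi₁S
  have htnn : 0 ≤ t := by
    rw [hi₁]; exact div_nonneg (hc i₁) hei₁.le
  set c' : Fin (r + 1) → ℝ := fun i => c i - t * e i with hc'
  have hc'nn : ∀ i, 0 ≤ c' i := by
    intro i
    by_cases h : 0 < e i
    · have hiS : i ∈ S := by simp [hS, h]
      have : t ≤ c i / e i := Finset.inf'_le _ hiS
      have := (le_div_iff₀ h).mp this
      simpa [hc'] using this
    · push_neg at h
      have : t * e i ≤ 0 := mul_nonpos_of_nonneg_of_nonpos htnn h
      simp only [hc', sub_nonneg]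
      exact this.trans (hc i)
  have hc'i₁ : c' i₁ = 0 := by
    simp only [hc', hi₁]
    field_simp
    simp
  have hsum : ∑ i, c' i • v i = ∑ i, c i • v i := by
    simp only [hc', sub_smul, mul_smul, Finset.sum_sub_distrib]
    rw [← Finset.smul_sum, he, smul_zero, sub_zero]
  refine ⟨i₁, fun j => c' (i₁.succAbove j), fun j => hc'nn _, ?_⟩
  rw [← hsum, Fin.sum_univ_succAbove (fun i => c' i • v i) i₁, hc'i₁, zero_smul, zero_add]

lemma isClosed_coneSet : ∀ (r : ℕ) (v : Fin r → E), IsClosed (coneSet v) := by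
  intro r
  induction r with
  | zero =>
    intro v
    have : coneSet v = {0} := by
      ext x
      constructor
      · rintro ⟨c, -, rfl⟩; simp
      · rintro rfl; exact ⟨0, fun i => le_rfl, by simp⟩
    rw [this]; exact isClosed_singleton
  | succ r ih =>
    intro v
    by_cases h : LinearIndependent ℝ v
    · have hinj : Function.Injective (combMap v) := by
        rw [injective_iff_map_eq_zero]
        intro c hc
        have := Fintype.linearIndependent_iff.mp h c hc
        funext i; exact this i
      have hemb := LinearMap.isClosedEmbedding_of_injective
        (LinearMap.ker_eq_bot.mpr hinj)
      have horth : IsClosed {c : Fin (r + 1) → ℝ | ∀ i, 0 ≤ c i} := by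
        have : {c : Fin (r + 1) → ℝ | ∀ i, 0 ≤ c i} =
            ⋂ i, (fun c : Fin (r + 1) → ℝ => c i) ⁻¹' Set.Ici 0 := by
          ext c; simp
        rw [this]
        exact isClosed_iInter fun i => isClosed_Ici.preimage (continuous_apply i)
      have : coneSet v = (combMap v) '' {c | ∀ i, 0 ≤ c i} := by
        ext x
        simp only [coneSet, Set.mem_image, Set.mem_setOf_eq, combMap, LinearMap.coe_mk,
          AddHom.coe_mk]
        constructor
        · rintro ⟨c, h1, h2⟩; exact ⟨c, h1, h2.symm⟩
        · rintro ⟨c, h1, h2⟩; exact ⟨c, h1, h2.symm⟩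
      rw [this]
      exact hemb.isClosedMap _ horth
    · obtain ⟨d, hd, i₀, hdi₀⟩ := Fintype.not_linearIndependent_iff.mp h
      have key : coneSet v = ⋃ i : Fin (r + 1), coneSet (fun j => v (i.succAbove j)) := by
        ext x
        simp only [Set.mem_iUnion]
        constructor
        · rintro ⟨c, hc, rfl⟩
          rcases lt_or_gt_of_ne hdi₀ with hneg | hpos
          · exact reduce_step v (-d) (by simpa using hd) i₀ (by simpa using hneg) c hc
          · exact reduce_step v d hd i₀ hpos c hc
        · rintro ⟨i, c, hc, rfl⟩
          refine ⟨Fin.insertNth (α := fun _ => ℝ) i 0 c, ?_, ?_⟩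
          · intro k
            refine Fin.succAboveCases (α := fun k => 0 ≤ Fin.insertNth (α := fun _ => ℝ) i 0 c k)
              i ?_ ?_ k
            · simp
            · intro j; simp [hc j]
          · rw [Fin.sum_univ_succAbove
              (fun k => Fin.insertNth (α := fun _ => ℝ) i 0 c k • v k) i]
            simp
      rw [key]
      exact isClosed_iUnion_of_finite fun i => ih _

omit [FiniteDimensional ℝ E] in
lemma smul_mem_coneSet {r : ℕ} {v : Fin r → E} {t : ℝ} (ht : 0 ≤ t) {x : E}
    (hx : x ∈ coneSet v) : t • x ∈ coneSet v := by
  obtain ⟨c, hc, rfl⟩ := hx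
  exact ⟨fun i => t * c i, fun i => mul_nonneg ht (hc i),
    by rw [Finset.smul_sum]; simp [smul_smul]⟩

omit [FiniteDimensional ℝ E] in
lemma mem_coneSet_append {r' r : ℕ} {v' : Fin r' → E} {v : Fin r → E} {x : E} :
    x ∈ coneSet (Fin.append v' (fun i => -v i)) ↔
      ∃ a ∈ coneSet v', ∃ b ∈ coneSet v, x = a - b := by
  constructor
  · rintro ⟨c, hc, rfl⟩
    refine ⟨∑ i, c (Fin.castAdd r i) • v' i, ⟨_, fun i => hc _, rfl⟩,
      ∑ i, c (Fin.natAdd r' i) • v i, ⟨_, fun i => hc _, rfl⟩, ?_⟩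
    rw [Fin.sum_univ_add]
    simp [sub_eq_add_neg, Finset.sum_neg_distrib]
  · rintro ⟨a, ⟨ca, hca, rfl⟩, b, ⟨cb, hcb, rfl⟩, rfl⟩
    refine ⟨Fin.append ca cb, ?_, ?_⟩
    · intro i
      induction i using Fin.addCases with
      | left i => simpa using hca i
      | right i => simpa using hcb i
    · rw [Fin.sum_univ_add]
      simp [sub_eq_add_neg, Finset.sum_neg_distrib]

end Aux

/-- If `(w + σ) ∩ σ' = ∅` for convex polyhedral cones `σ, σ'` and `K` is
compact, then `K + λw + σ` and `K + σ'` are disjoint for all large enough `λ > 0`. -/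
theorem compact_thickenings_eventually_disjoint {n : ℕ}
    (σ σ' : Set (EuclideanSpace ℝ (Fin n)))
    (hσ : IsPolyhedralCone σ) (hσ' : IsPolyhedralCone σ')
    (w : EuclideanSpace ℝ (Fin n)) (hw : ({w} + σ) ∩ σ' = ∅)
    (K : Set (EuclideanSpace ℝ (Fin n))) (hK : IsCompact K) :
    ∃ lam₀ : ℝ, 0 < lam₀ ∧ ∀ lam : ℝ, lam₀ ≤ lam →
      (K + {lam • w} + σ) ∩ (K + σ') = ∅ := by
  classical
  obtain ⟨⟨r, v, hv⟩, -⟩ := hσ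
  obtain ⟨⟨r', v', hv'⟩, -⟩ := hσ'
  have hσc : σ = coneSet v := hv
  have hσ'c : σ' = coneSet v' := hv'
  set D := coneSet (Fin.append v' (fun i => -v i)) with hD
  have hDclosed : IsClosed D := isClosed_coneSet _ _
  have hwD : w ∉ D := by
    intro hwmem
    obtain ⟨a, ha, b, hb, hab⟩ := mem_coneSet_append.mp hwmem
    have h1 : w + b ∈ ({w} + σ) := Set.add_mem_add rfl (hσc ▸ hb)
    have h2 : w + b ∈ σ' := by
      have : w + b = a := by rw [hab]; abel
      rw [this]; exact hσ'c ▸ ha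
    rw [Set.eq_empty_iff_forall_notMem] at hw
    exact hw (w + b) ⟨h1, h2⟩
  obtain ⟨ε, hε, hball⟩ := Metric.isOpen_iff.mp hDclosed.isOpen_compl w hwD
  obtain ⟨M, hM⟩ := hK.isBounded.exists_norm_le
  set M' : ℝ := max M 0 with hM'def
  have hM' : ∀ x ∈ K, ‖x‖ ≤ M' := fun x hx => (hM x hx).trans (le_max_left _ _)
  have hM'nn : 0 ≤ M' := le_max_right _ _
  refine ⟨(2 * M' + 1) / ε, by positivity, ?_⟩
  intro lam hlam
  have hlampos : 0 < lam := lt_of_lt_of_le (by positivity) hlam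
  have hlamne : lam ≠ 0 := hlampos.ne'
  rw [Set.eq_empty_iff_forall_notMem]
  rintro x ⟨hx1, hx2⟩
  rw [Set.mem_add] at hx1
  obtain ⟨y, hy, s, hs, hxe⟩ := hx1
  rw [Set.mem_add] at hy
  obtain ⟨k, hk, z, hz, rfl⟩ := hy
  rw [Set.mem_singleton_iff] at hz
  subst hz
  rw [Set.mem_add] at hx2
  obtain ⟨k', hk', s', hs', hxe'⟩ := hx2
  have heq : k + lam • w + s = k' + s' := by rw [hxe, hxe']
  have h2 : lam • w = k' + s' - k - s := by rw [← heq]; abel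
  have h3 : lam • w - (s' - s) = k' - k := by rw [h2]; abel
  set x₀ : EuclideanSpace ℝ (Fin n) := lam⁻¹ • (s' - s) with hx₀
  have hx₀D : x₀ ∈ D := by
    rw [hD, hx₀, smul_sub]
    exact mem_coneSet_append.mpr ⟨lam⁻¹ • s', smul_mem_coneSet (by positivity) (hσ'c ▸ hs'),
      lam⁻¹ • s, smul_mem_coneSet (by positivity) (hσc ▸ hs), rfl⟩
  have h4 : w - x₀ = lam⁻¹ • (k' - k) := by
    rw [hx₀, ← h3]
    match_scalars <;> field_simp
  have hnorm : ‖w - x₀‖ = lam⁻¹ * ‖k' - k‖ := by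
    rw [h4, norm_smul, Real.norm_eq_abs, abs_of_pos (inv_pos.mpr hlampos)]
  have hkk : ‖k' - k‖ ≤ 2 * M' := by
    have := hM' k hk
    have := hM' k' hk'
    calc ‖k' - k‖ ≤ ‖k'‖ + ‖k‖ := norm_sub_le _ _
      _ ≤ 2 * M' := by linarith
  have hlt : ‖w - x₀‖ < ε := by
    rw [hnorm, inv_mul_lt_iff₀ hlampos]
    have h5 : (2 * M' + 1) / ε * ε ≤ lam * ε :=
      mul_le_mul_of_nonneg_right hlam hε.le
    rw [div_mul_cancel₀ _ hε.ne'] at h5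
    linarith
  have : x₀ ∈ Metric.ball w ε := by
    rw [Metric.mem_ball, dist_eq_norm, norm_sub_rev]
    exact hlt
  exact hball this hx₀D
end

section
/- Let σ̃₁ and σ̃₂ be convex polyhedral cones in ℝⁿ and let σ be a cone that is a face of both σ̃₁ and σ̃₂. Let p : ℝⁿ → ℝⁿ be a linear projection (p ∘ p = p) whose kernel is L(σ), the linear span of σ. If x ∈ p(σ̃₁) and y ∈ p(σ̃₂), then there exists w ∈ σ such that x + w ∈ σ̃₁ and y + w ∈ σ̃₂. In particular, y − x = (y + w) − (x + w) lies in the Minkowski difference σ̃₂ − σ̃₁ = {b − a : a ∈ σ̃₁, b ∈ σ̃₂}. -/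
open Pointwise

/-- `τ` is a face of the cone `σ`: the vanishing locus on `σ` of a linear functional which is
nonnegative on `σ`. -/
lemma pc_zero {n : ℕ} {σ : Set (EuclideanSpace ℝ (Fin n))} (h : IsPolyhedralCone σ) :
    (0 : EuclideanSpace ℝ (Fin n)) ∈ σ := by
  obtain ⟨⟨r, v, rfl⟩, -⟩ := h
  exact ⟨0, fun i => le_refl 0, by simp⟩

lemma pc_add {n : ℕ} {σ : Set (EuclideanSpace ℝ (Fin n))} (h : IsPolyhedralCone σ)
    {a b : EuclideanSpace ℝ (Fin n)} (ha : a ∈ σ) (hb : b ∈ σ) : a + b ∈ σ := by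
  obtain ⟨⟨r, v, rfl⟩, -⟩ := h
  obtain ⟨c, hc, rfl⟩ := ha
  obtain ⟨d, hd, rfl⟩ := hb
  exact ⟨c + d, fun i => add_nonneg (hc i) (hd i), by
    simp [add_smul, Finset.sum_add_distrib]⟩

lemma pc_smul {n : ℕ} {σ : Set (EuclideanSpace ℝ (Fin n))} (h : IsPolyhedralCone σ)
    {r : ℝ} (hr : 0 ≤ r) {a : EuclideanSpace ℝ (Fin n)} (ha : a ∈ σ) : r • a ∈ σ := by
  obtain ⟨⟨m, v, rfl⟩, -⟩ := h
  obtain ⟨c, hc, rfl⟩ := ha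
  exact ⟨fun i => r * c i, fun i => mul_nonneg hr (hc i), by
    rw [Finset.smul_sum]; simp [smul_smul]⟩

lemma span_eq_diff {n : ℕ} {σ : Set (EuclideanSpace ℝ (Fin n))} (h : IsPolyhedralCone σ)
    {s : EuclideanSpace ℝ (Fin n)} (hs : s ∈ Submodule.span ℝ σ) :
    ∃ u ∈ σ, ∃ v ∈ σ, s = u - v := by
  induction hs using Submodule.span_induction with
  | mem z hz => exact ⟨z, hz, 0, pc_zero h, by simp⟩
  | zero => exact ⟨0, pc_zero h, 0, pc_zero h, by simp⟩
  | add z w _ _ ihz ihw =>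
    obtain ⟨u1, hu1, v1, hv1, rfl⟩ := ihz
    obtain ⟨u2, hu2, v2, hv2, rfl⟩ := ihw
    exact ⟨u1 + u2, pc_add h hu1 hu2, v1 + v2, pc_add h hv1 hv2, by abel⟩
  | smul r z _ ih =>
    obtain ⟨u, hu, v, hv, rfl⟩ := ih
    rcases le_or_gt 0 r with hr | hr
    · exact ⟨r • u, pc_smul h hr hu, r • v, pc_smul h hr hv, by rw [smul_sub]⟩
    · refine ⟨(-r) • v, pc_smul h (by linarith) hv, (-r) • u, pc_smul h (by linarith) hu, ?_⟩
      rw [smul_sub, neg_smul, neg_smul]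
      abel

/-- Let `σ` be a common face of the convex polyhedral cones `σ̃₁` and `σ̃₂`,
and let `p` be a linear projection with kernel `L(σ)`. If `x ∈ p(σ̃₁)` and `y ∈ p(σ̃₂)`, then
there is `w ∈ σ` with `x + w ∈ σ̃₁` and `y + w ∈ σ̃₂` (so `y − x ∈ σ̃₂ − σ̃₁`). -/
theorem common_translate_into_cones {n : ℕ}
    (σ₁ σ₂ σ : Set (EuclideanSpace ℝ (Fin n)))
    (hσ₁ : IsPolyhedralCone σ₁) (hσ₂ : IsPolyhedralCone σ₂) (hσ : IsPolyhedralCone σ)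
    (hf₁ : IsFaceOf σ σ₁) (hf₂ : IsFaceOf σ σ₂)
    (p : EuclideanSpace ℝ (Fin n) →ₗ[ℝ] EuclideanSpace ℝ (Fin n))
    (hproj : p ∘ₗ p = p)
    (hker : LinearMap.ker p = Submodule.span ℝ σ)
    (x y : EuclideanSpace ℝ (Fin n)) (hx : x ∈ p '' σ₁) (hy : y ∈ p '' σ₂) :
    (∃ w ∈ σ, x + w ∈ σ₁ ∧ y + w ∈ σ₂) ∧
      y - x ∈ {z : EuclideanSpace ℝ (Fin n) | ∃ a ∈ σ₁, ∃ b ∈ σ₂, z = b - a} := by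
  obtain ⟨φ₁, -, hface₁⟩ := hf₁
  obtain ⟨φ₂, -, hface₂⟩ := hf₂
  have hsub1 : σ ⊆ σ₁ := by intro z hz; rw [hface₁] at hz; exact hz.1
  have hsub2 : σ ⊆ σ₂ := by intro z hz; rw [hface₂] at hz; exact hz.1
  obtain ⟨a, ha, rfl⟩ := hx
  obtain ⟨b, hb, rfl⟩ := hy
  have hpp : ∀ z, p (p z) = p z := fun z => DFunLike.congr_fun hproj z
  have h1 : a - p a ∈ Submodule.span ℝ σ := by
    rw [← hker, LinearMap.mem_ker, map_sub, hpp, sub_self]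
  have h2 : b - p b ∈ Submodule.span ℝ σ := by
    rw [← hker, LinearMap.mem_ker, map_sub, hpp, sub_self]
  obtain ⟨u1, hu1, v1, hv1, heq1⟩ := span_eq_diff hσ h1
  obtain ⟨u2, hu2, v2, hv2, heq2⟩ := span_eq_diff hσ h2
  have hw : u1 + u2 ∈ σ := pc_add hσ hu1 hu2
  have e1 : p a + (u1 + u2) = a + v1 + u2 := by
    have h : p a = a - (u1 - v1) := by rw [← heq1]; abel
    rw [h]; abel
  have e2 : p b + (u1 + u2) = b + v2 + u1 := by
    have h : p b = b - (u2 - v2) := by rw [← heq2]; abel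
    rw [h]; abel
  have m1 : p a + (u1 + u2) ∈ σ₁ := by
    rw [e1]; exact pc_add hσ₁ (pc_add hσ₁ ha (hsub1 hv1)) (hsub1 hu2)
  have m2 : p b + (u1 + u2) ∈ σ₂ := by
    rw [e2]; exact pc_add hσ₂ (pc_add hσ₂ hb (hsub2 hv2)) (hsub2 hu1)
  exact ⟨⟨u1 + u2, hw, m1, m2⟩,
    ⟨p a + (u1 + u2), m1, p b + (u1 + u2), m2, by abel⟩⟩
end
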